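/- arXiv:2301.10901 — 9 statements merged into one kernel-verified Lean document; each statement's English description precedes it below -/
import Mathlib

section
/- Let x_1 < x_2 < ... < x_n be distinct real numbers and let P = {x_1, ..., x_n}. For x ∈ ℝ define G(x) = min{x_k : x_k > x} − max{x_k : x_k < x} (taken to be +∞ if either set is empty). Then for any indices k < l, the leapfrog distance satisfies LF(x_k, x_l) = ∑_{i=k}^{l−1} (x_{i+1} − x_i)², and moreover LF(x_k, x_l) = ∫_{x_k}^{x_l} G(x) dx. -/
open MeasureTheory

/-- Leapfrog distance over a point set `P`: infimum over finite paths through `P`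
of the sum of squared norms of the steps. -/
noncomputable def LF {E : Type*} [NormedAddCommGroup E] (P : Set E) (a b : E) : ℝ :=
  sInf {c : ℝ | ∃ m : ℕ, ∃ p : Fin (m + 1) → E,
    p 0 = a ∧ p (Fin.last m) = b ∧ (∀ i, p i ∈ P) ∧
    c = ∑ i : Fin m, ‖p i.succ - p i.castSucc‖ ^ 2}

lemma telescope_Ico (f : ℕ → ℝ) {a b : ℕ} (h : a ≤ b) :
    ∑ i ∈ Finset.Ico a b, (f (i + 1) - f i) = f b - f a := by
  induction b, h using Nat.le_induction with
  | base => simp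
  | succ b hb ih => rw [Finset.sum_Ico_succ_top hb, ih]; ring

lemma sum_sq_le_sq_sum (s : Finset ℕ) (g : ℕ → ℝ) (hg : ∀ i ∈ s, 0 ≤ g i) :
    ∑ i ∈ s, g i ^ 2 ≤ (∑ i ∈ s, g i) ^ 2 := by
  rw [sq (∑ i ∈ s, g i), Finset.sum_mul]
  refine Finset.sum_le_sum fun i hi => ?_
  rw [sq]
  exact mul_le_mul_of_nonneg_left (Finset.single_le_sum hg hi) (hg i hi)

/-- for strictly increasing points `x 0 < x 1 < ⋯ < x (n-1)` with
`P = {x 0, …, x (n-1)}`, and `G t = min {y ∈ P | y > t} - max {y ∈ P | y < t}`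
(arbitrary where either set is empty), for `k < l < n` the leapfrog distance equals
`∑_{i=k}^{l-1} (x (i+1) - x i)²`, which also equals `∫_{x k}^{x l} G`. -/
theorem stmt0 (n : ℕ) (x : ℕ → ℝ) (hx : ∀ i j : ℕ, i < j → j < n → x i < x j)
    (P : Set ℝ) (hP : P = x '' {i | i < n})
    (G : ℝ → ℝ)
    (hG : ∀ t : ℝ, {y ∈ P | t < y}.Nonempty → {y ∈ P | y < t}.Nonempty →
      G t = sInf {y ∈ P | t < y} - sSup {y ∈ P | y < t})
    (k l : ℕ) (hkl : k < l) (hl : l < n) :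
    LF P (x k) (x l) = ∑ i ∈ Finset.Ico k l, (x (i + 1) - x i) ^ 2 ∧
    LF P (x k) (x l) = ∫ t in (x k)..(x l), G t := by
  have hn : k < n := hkl.trans hl
  have hmono : ∀ i j : ℕ, i ≤ j → j < n → x i ≤ x j := fun i j hij hj =>
    hij.lt_or_eq.elim (fun h => (hx i j h hj).le) (fun h => h ▸ le_rfl)
  have hinj : ∀ a b : ℕ, a < n → b < n → x a = x b → a = b := by
    intro a b ha hb hab
    rcases lt_trichotomy a b with h | h | h
    · exact absurd hab (hx a b h hb).ne
    · exact h
    · exact absurd hab.symm (hx b a h ha).ne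
  set g : ℕ → ℝ := fun i => x (i + 1) - x i with hgdef
  -- cost of a single monotone jump dominates the squared gaps it crosses
  have step : ∀ a b : ℕ, a ≤ b → b < n →
      ∑ i ∈ Finset.Ico a b, g i ^ 2 ≤ (x b - x a) ^ 2 := by
    intro a b hab hb
    have hnn : ∀ i ∈ Finset.Ico a b, 0 ≤ g i := by
      intro i hi
      rw [Finset.mem_Ico] at hi
      exact sub_nonneg.2 (hx i (i + 1) (Nat.lt_succ_self i) (lt_of_le_of_lt hi.2 hb)).le
    calc ∑ i ∈ Finset.Ico a b, g i ^ 2 ≤ (∑ i ∈ Finset.Ico a b, g i) ^ 2 :=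
          sum_sq_le_sq_sum _ _ hnn
      _ = (x b - x a) ^ 2 := by rw [hgdef, telescope_Ico x hab]
  set S : ℝ := ∑ i ∈ Finset.Ico k l, (x (i + 1) - x i) ^ 2 with hSdef
  -- S is attained by the consecutive path
  have hmem : S ∈ {c : ℝ | ∃ m : ℕ, ∃ p : Fin (m + 1) → ℝ,
      p 0 = x k ∧ p (Fin.last m) = x l ∧ (∀ i, p i ∈ P) ∧
      c = ∑ i : Fin m, ‖p i.succ - p i.castSucc‖ ^ 2} := by
    refine ⟨l - k, fun j => x (k + j.val), by simp, ?_, ?_, ?_⟩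
    · simp [Fin.last, Nat.add_sub_cancel' hkl.le]
    · intro j
      rw [hP]
      refine ⟨k + j.val, ?_, rfl⟩
      have : j.val ≤ l - k := Nat.lt_succ_iff.mp j.isLt
      have : k + j.val ≤ l := by omega
      exact lt_of_le_of_lt this hl
    · rw [hSdef, Finset.sum_Ico_eq_sum_range, ← Fin.sum_univ_eq_sum_range]
      refine Finset.sum_congr rfl fun j _ => ?_
      simp [Real.norm_eq_abs, sq_abs, Fin.val_succ, Nat.add_assoc]
  -- lower bound
  have hlb : ∀ c ∈ {c : ℝ | ∃ m : ℕ, ∃ p : Fin (m + 1) → ℝ,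
      p 0 = x k ∧ p (Fin.last m) = x l ∧ (∀ i, p i ∈ P) ∧
      c = ∑ i : Fin m, ‖p i.succ - p i.castSucc‖ ^ 2}, S ≤ c := by
    rintro c ⟨m, p, hp0, hpl, hpm, rfl⟩
    have hex : ∀ j : Fin (m + 1), ∃ a, a < n ∧ x a = p j := by
      intro j
      have := hpm j
      rw [hP] at this
      obtain ⟨a, ha, hxa⟩ := this
      exact ⟨a, ha, hxa⟩
    choose σ hσlt hσx using hex
    have hσ0 : σ 0 = k := hinj _ _ (hσlt 0) hn (by rw [hσx 0, hp0])
    have hσm : σ (Fin.last m) = l := hinj _ _ (hσlt _) hl (by rw [hσx _, hpl])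
    have hm : 0 < m := by
      rcases Nat.eq_zero_or_pos m with h | h
      · exfalso
        subst h
        have : (0 : Fin 1) = Fin.last 0 := rfl
        rw [this, hσm] at hσ0
        omega
      · exact h
    -- crossing argument
    have hcross : ∀ i, k ≤ i → i < l →
        ∃ j : Fin m, σ j.castSucc ≤ i ∧ i + 1 ≤ σ j.succ := by
      intro i hki hil
      set τ : ℕ → ℕ := fun j => σ ⟨min j m, Nat.lt_succ_of_le (min_le_right j m)⟩ with hτ
      have hQm : i < τ m := by
        have : (⟨min m m, Nat.lt_succ_of_le (min_le_right m m)⟩ : Fin (m + 1)) = Fin.last m := by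
          ext; simp
        rw [hτ]; simp only; rw [this, hσm]; exact hil
      have hEx : ∃ j, i < τ j := ⟨m, hQm⟩
      have hkey : ∃ j, j < m ∧ τ j ≤ i ∧ i < τ (j + 1) := by
        have hj0 : i < τ (Nat.find hEx) := Nat.find_spec hEx
        have hj0m : Nat.find hEx ≤ m := Nat.find_min' hEx hQm
        have hj00 : Nat.find hEx ≠ 0 := by
          intro h
          rw [h] at hj0
          have h0 : (⟨min 0 m, Nat.lt_succ_of_le (min_le_right 0 m)⟩ : Fin (m + 1)) = 0 := by
            ext; simp
          rw [hτ] at hj0; simp only at hj0; rw [h0, hσ0] at hj0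
          omega
        refine ⟨Nat.find hEx - 1, by omega, ?_, ?_⟩
        · exact Nat.le_of_not_lt (Nat.find_min hEx (by omega))
        · have heq : Nat.find hEx - 1 + 1 = Nat.find hEx := by omega
          rw [heq]; exact hj0
      obtain ⟨j, hjm, hprev, hj0⟩ := hkey
      refine ⟨⟨j, hjm⟩, ?_, ?_⟩
      · have : (Fin.castSucc ⟨j, hjm⟩ : Fin (m + 1)) =
            ⟨min j m, Nat.lt_succ_of_le (min_le_right j m)⟩ := by
          ext; simp [Nat.min_eq_left hjm.le]
        rw [this]
        exact hprev
      · have : (Fin.succ ⟨j, hjm⟩ : Fin (m + 1)) =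
            ⟨min (j + 1) m, Nat.lt_succ_of_le (min_le_right (j + 1) m)⟩ := by
          ext; simp [Nat.min_eq_left hjm]
        rw [this]
        exact hj0
    -- assign a witness step to each gap
    have hwit : ∀ i : ℕ, ∃ j : Fin m, k ≤ i → i < l → σ j.castSucc ≤ i ∧ i + 1 ≤ σ j.succ := by
      intro i
      by_cases h : k ≤ i ∧ i < l
      · obtain ⟨j, hj1, hj2⟩ := hcross i h.1 h.2
        exact ⟨j, fun _ _ => ⟨hj1, hj2⟩⟩
      · exact ⟨⟨0, hm⟩, fun h1 h2 => absurd ⟨h1, h2⟩ h⟩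
    choose w hw using hwit
    have key : S ≤ ∑ j : Fin m, ‖p j.succ - p j.castSucc‖ ^ 2 := by
      rw [hSdef]
      have hfib := Finset.sum_fiberwise_of_maps_to
        (g := w) (f := fun i => (x (i + 1) - x i) ^ 2)
        (fun i (_ : i ∈ Finset.Ico k l) => Finset.mem_univ (w i))
      rw [← hfib]
      refine Finset.sum_le_sum fun j _ => ?_
      by_cases hne : ((Finset.Ico k l).filter (fun i => w i = j)).Nonempty
      · obtain ⟨i0, hi0⟩ := hne
        rw [Finset.mem_filter, Finset.mem_Ico] at hi0
        obtain ⟨⟨hki0, hi0l⟩, hwi0⟩ := hi0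
        have hab0 := hw i0 hki0 hi0l
        rw [hwi0] at hab0
        have hsub : (Finset.Ico k l).filter (fun i => w i = j) ⊆
            Finset.Ico (σ j.castSucc) (σ j.succ) := by
          intro i hi
          rw [Finset.mem_filter, Finset.mem_Ico] at hi
          obtain ⟨⟨hki, hil⟩, hwi⟩ := hi
          have := hw i hki hil
          rw [hwi] at this
          rw [Finset.mem_Ico]
          exact ⟨this.1, this.2⟩
        calc ∑ i ∈ (Finset.Ico k l).filter (fun i => w i = j), (x (i + 1) - x i) ^ 2
            ≤ ∑ i ∈ Finset.Ico (σ j.castSucc) (σ j.succ), g i ^ 2 :=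
              Finset.sum_le_sum_of_subset_of_nonneg hsub (fun i _ _ => sq_nonneg _)
          _ ≤ (x (σ j.succ) - x (σ j.castSucc)) ^ 2 :=
              step _ _ (le_trans hab0.1 (le_trans (Nat.le_succ i0) hab0.2)) (hσlt _)
          _ = ‖p j.succ - p j.castSucc‖ ^ 2 := by
              rw [hσx, hσx, Real.norm_eq_abs, sq_abs]
      · rw [Finset.not_nonempty_iff_eq_empty] at hne
        rw [hne, Finset.sum_empty]
        positivity
    exact key
  have hLF : LF P (x k) (x l) = S := by
    rw [LF]
    exact IsLeast.csInf_eq ⟨hmem, hlb⟩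
  refine ⟨hLF, ?_⟩
  -- integral part
  have piece : ∀ j, k ≤ j → j < l →
      IntervalIntegrable G volume (x j) (x (j + 1)) ∧
      ∫ t in (x j)..(x (j + 1)), G t = (x (j + 1) - x j) ^ 2 := by
    intro j hkj hjl
    have hj1n : j + 1 < n := by omega
    have hjn : j < n := by omega
    set a := x j with hadef
    set b := x (j + 1) with hbdef
    have hab : a < b := hx j (j + 1) (Nat.lt_succ_self j) hj1n
    have hGc : ∀ t ∈ Set.Ioo a b, G t = b - a := by
      intro t ht
      have hbP : b ∈ P := by rw [hP]; exact ⟨j + 1, hj1n, rfl⟩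
      have haP : a ∈ P := by rw [hP]; exact ⟨j, hjn, rfl⟩
      have h1 : {y ∈ P | t < y}.Nonempty := ⟨b, hbP, ht.2⟩
      have h2 : {y ∈ P | y < t}.Nonempty := ⟨a, haP, ht.1⟩
      rw [hG t h1 h2]
      have hinf : sInf {y ∈ P | t < y} = b := by
        refine IsLeast.csInf_eq ⟨⟨hbP, ht.2⟩, ?_⟩
        rintro y ⟨hyP, hty⟩
        rw [hP] at hyP
        obtain ⟨c, hc, rfl⟩ := hyP
        have hc' : j + 1 ≤ c := by
          by_contra h
          have : c ≤ j := by omega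
          exact absurd hty (not_lt.2 ((hmono c j this hjn).trans ht.1.le))
        exact hmono (j + 1) c hc' hc
      have hsup : sSup {y ∈ P | y < t} = a := by
        refine IsGreatest.csSup_eq ⟨⟨haP, ht.1⟩, ?_⟩
        rintro y ⟨hyP, hyt⟩
        rw [hP] at hyP
        obtain ⟨c, hc, rfl⟩ := hyP
        have hc' : c ≤ j := by
          by_contra h
          have : j + 1 ≤ c := by omega
          exact absurd hyt (not_lt.2 (le_trans ht.2.le (hmono (j + 1) c this hc)))
        exact hmono c j hc' hjn
      rw [hinf, hsup]
    have hneb : ∀ᵐ t : ℝ, t ≠ b := by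
      have h := measure_singleton (μ := (volume : Measure ℝ)) b
      rw [Filter.eventually_iff, MeasureTheory.mem_ae_iff]
      convert h using 2
      ext t; simp
    have hae : G =ᵐ[volume.restrict (Set.Ioc a b)] fun _ => b - a := by
      have h1 : ∀ᵐ t ∂(volume.restrict (Set.Ioc a b)), t ∈ Set.Ioc a b :=
        ae_restrict_mem measurableSet_Ioc
      have h2 : ∀ᵐ t ∂(volume.restrict (Set.Ioc a b)), t ≠ b :=
        hneb.filter_mono (MeasureTheory.ae_mono Measure.restrict_le_self)
      filter_upwards [h1, h2] with t ht hne
      exact hGc t ⟨ht.1, lt_of_le_of_ne ht.2 hne⟩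
    have hii : IntervalIntegrable G volume a b := by
      rw [intervalIntegrable_iff_integrableOn_Ioc_of_le hab.le]
      exact (integrableOn_const measure_Ioc_lt_top.ne).congr hae.symm
    refine ⟨hii, ?_⟩
    have hcongr : ∀ᵐ t ∂(volume : Measure ℝ), t ∈ Set.uIoc a b → G t = b - a := by
      filter_upwards [hneb] with t hne ht
      rw [Set.uIoc_of_le hab.le] at ht
      exact hGc t ⟨ht.1, lt_of_le_of_ne ht.2 hne⟩
    rw [intervalIntegral.integral_congr_ae hcongr, intervalIntegral.integral_const,
      smul_eq_mul, sq]
  have hsum := intervalIntegral.sum_integral_adjacent_intervals_Ico (f := G) (μ := volume)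
    (a := x) hkl.le (fun j hj => by
      rw [Set.mem_Ico] at hj
      exact (piece j hj.1 hj.2).1)
  rw [hLF, ← hsum]
  refine Finset.sum_congr rfl fun j hj => ?_
  rw [Finset.mem_Ico] at hj
  exact ((piece j hj.1 hj.2).2).symm
end

section
/- There exist a constant c > 0 and an integer n_0 (both depending only on f) such that for all n ≥ n_0, the probability (over n i.i.d. samples X_1,…,X_n from f) that there exists x ∈ U_n with G(x) > σ is at most c · n^{0.75} · exp(−n^{0.25} · v_U · f̲ / 4), where σ = n^{−0.75} v_U. -/
open MeasureTheory

open Classical in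
noncomputable def Gfun {n : ℕ} (ω : Fin n → ℝ) (x : ℝ) : EReal :=
  if ({k : Fin n | x < ω k}.Nonempty ∧ {k : Fin n | ω k < x}.Nonempty) then
    (((sInf (ω '' {k : Fin n | x < ω k}) - sSup (ω '' {k : Fin n | ω k < x})) : ℝ) : EReal)
  else ⊤

lemma gap_lemma {n : ℕ} (ω : Fin n → ℝ) (x σ : ℝ)
    (h : ((σ : ℝ) : EReal) < Gfun ω x) :
    (∀ k, ω k ∉ Set.Ioo x (x + σ/2)) ∨ (∀ k, ω k ∉ Set.Ioo (x - σ/2) x) := by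
  unfold Gfun at h
  split_ifs at h with hne
  · obtain ⟨h1, h2⟩ := hne
    have hfinP : (ω '' {k : Fin n | x < ω k}).Finite := (Set.toFinite _).image ω
    have hfinM : (ω '' {k : Fin n | ω k < x}).Finite := (Set.toFinite _).image ω
    have hσlt : σ < sInf (ω '' {k : Fin n | x < ω k}) - sSup (ω '' {k : Fin n | ω k < x}) :=
      EReal.coe_lt_coe_iff.mp h
    by_cases hc : x + σ/2 < sInf (ω '' {k : Fin n | x < ω k})
    · left
      intro k hk
      have hle : sInf (ω '' {k : Fin n | x < ω k}) ≤ ω k :=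
        csInf_le hfinP.bddBelow ⟨k, hk.1, rfl⟩
      have := hk.2
      linarith
    · right
      push_neg at hc
      have hmx : x < sInf (ω '' {k : Fin n | x < ω k}) := by
        obtain ⟨k, hk, hek⟩ := (h1.image ω).csInf_mem hfinP
        rw [← hek]; exact hk
      intro k hk
      have hle : ω k ≤ sSup (ω '' {k : Fin n | ω k < x}) :=
        le_csSup hfinM.bddAbove ⟨k, hk.2, rfl⟩
      have := hk.1
      linarith
  · rw [not_and_or] at hne
    rcases hne with hne | hne
    · left; intro k hk
      exact hne ⟨k, hk.1⟩
    · right; intro k hk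
      exact hne ⟨k, hk.2⟩

lemma one_sub_ofReal_le_exp {r : ℝ} (hr : 0 ≤ r) :
    (1 : ENNReal) - ENNReal.ofReal r ≤ ENNReal.ofReal (Real.exp (-r)) := by
  have h1 : (1 : ENNReal) - ENNReal.ofReal r = ENNReal.ofReal (1 - r) := by
    rw [ENNReal.ofReal_sub _ hr, ENNReal.ofReal_one]
  rw [h1]
  apply ENNReal.ofReal_le_ofReal
  have := Real.add_one_le_exp (-r)
  linarith

lemma no_sample_bound {n : ℕ} (f : ℝ → ℝ) (hfm : Measurable f)
    (hμ1 : (volume.withDensity fun x => ENNReal.ofReal (f x)) Set.univ = 1)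
    (t L flow : ℝ) (hL : 0 ≤ L) (hflow0 : 0 ≤ flow)
    (hlow : ∀ x ∈ Set.Icc t (t + L), flow ≤ f x) :
    (Measure.pi fun _ : Fin n => volume.withDensity fun x => ENNReal.ofReal (f x))
      {ω : Fin n → ℝ | ∀ k, ω k ∉ Set.Icc t (t + L)}
      ≤ ENNReal.ofReal (Real.exp (-(flow * L)) ^ n) := by
  haveI : IsProbabilityMeasure (volume.withDensity fun x => ENNReal.ofReal (f x)) := ⟨hμ1⟩
  set μ : Measure ℝ := volume.withDensity fun x => ENNReal.ofReal (f x) with hμdef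
  have hset : {ω : Fin n → ℝ | ∀ k, ω k ∉ Set.Icc t (t + L)}
      = Set.univ.pi (fun _ : Fin n => (Set.Icc t (t + L))ᶜ) := by
    ext ω; simp [Set.mem_pi]
  have hJ : ENNReal.ofReal (flow * L) ≤ μ (Set.Icc t (t + L)) := by
    rw [hμdef, withDensity_apply _ measurableSet_Icc]
    calc ENNReal.ofReal (flow * L)
        = ENNReal.ofReal flow * volume (Set.Icc t (t + L)) := by
          rw [Real.volume_Icc, add_sub_cancel_left, ENNReal.ofReal_mul hflow0]
      _ = ∫⁻ _ in Set.Icc t (t + L), ENNReal.ofReal flow := by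
          rw [setLIntegral_const]
      _ ≤ ∫⁻ x in Set.Icc t (t + L), ENNReal.ofReal (f x) := by
          apply setLIntegral_mono (hfm.ennreal_ofReal)
          intro x hx
          exact ENNReal.ofReal_le_ofReal (hlow x hx)
  have hcompl : μ (Set.Icc t (t + L))ᶜ ≤ ENNReal.ofReal (Real.exp (-(flow * L))) := by
    rw [measure_compl measurableSet_Icc (measure_ne_top _ _), hμ1]
    calc (1 : ENNReal) - μ (Set.Icc t (t + L)) ≤ 1 - ENNReal.ofReal (flow * L) :=
          tsub_le_tsub_left hJ 1
      _ ≤ ENNReal.ofReal (Real.exp (-(flow * L))) :=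
          one_sub_ofReal_le_exp (mul_nonneg hflow0 hL)
  rw [hset, Measure.pi_pi]
  simp only [Finset.prod_const, Finset.card_univ, Fintype.card_fin]
  rw [ENNReal.ofReal_pow (Real.exp_nonneg _)]
  exact pow_le_pow_left₀ zero_le hcompl n

/-- for a density `f` supported on a finite union of closed intervals,
continuous on each of them, with `U = {x | f x ≥ f̲}`, `v_U = vol U`, `σ = n^{-0.75} v_U`
and `U_n = {x ∈ U | [x-σ, x+σ] ⊆ U}`, there are `c > 0` and `n₀` such that for all
`n ≥ n₀`, the probability over `n` i.i.d. samples from `f` that some `x ∈ U_n` has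
`G(x) > σ` is at most `c · n^{0.75} · exp(-n^{0.25} v_U f̲ / 4)`. -/
theorem stmt1
    (f : ℝ → ℝ) (hfm : Measurable f) (hf0 : ∀ x, 0 ≤ f x) (hf1 : ∫ x, f x = 1)
    (m : ℕ) (I : Fin m → ℝ × ℝ)
    (hsupp : Function.support f = ⋃ i, Set.Icc (I i).1 (I i).2)
    (hcont : ∀ i, ContinuousOn f (Set.Icc (I i).1 (I i).2))
    (flow : ℝ) (hflow : 0 < flow)
    (U : Set ℝ) (hU : U = {x : ℝ | flow ≤ f x})
    (vU : ℝ) (hvU : vU = (volume U).toReal) :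
    ∃ c > (0 : ℝ), ∃ n0 : ℕ, ∀ n ≥ n0,
      (Measure.pi fun _ : Fin n => volume.withDensity fun x => ENNReal.ofReal (f x))
        {ω : Fin n → ℝ | ∃ x ∈ {y ∈ U |
            Set.Icc (y - (n : ℝ) ^ (-(0.75 : ℝ)) * vU) (y + (n : ℝ) ^ (-(0.75 : ℝ)) * vU) ⊆ U},
          (((n : ℝ) ^ (-(0.75 : ℝ)) * vU : ℝ) : EReal) < Gfun ω x}
      ≤ ENNReal.ofReal
          (c * (n : ℝ) ^ (0.75 : ℝ) * Real.exp (-(n : ℝ) ^ (0.25 : ℝ) * vU * flow / 4)) := by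
  have hint : Integrable f := by
    by_contra h
    rw [integral_undef h] at hf1; norm_num at hf1
  have hμ1 : (volume.withDensity fun x => ENNReal.ofReal (f x)) Set.univ = 1 := by
    rw [withDensity_apply _ MeasurableSet.univ, Measure.restrict_univ,
      ← ofReal_integral_eq_lintegral_ofReal hint (Filter.Eventually.of_forall hf0), hf1,
      ENNReal.ofReal_one]
  haveI : IsProbabilityMeasure (volume.withDensity fun x => ENNReal.ofReal (f x)) := ⟨hμ1⟩
  have hvU0 : 0 ≤ vU := hvU ▸ ENNReal.toReal_nonneg
  -- the support is bounded, hence U is contained in some [-R, R]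
  have hbdd : Bornology.IsBounded (⋃ i, Set.Icc (I i).1 (I i).2) := by
    exact Bornology.isBounded_iUnion.mpr (fun i => Metric.isBounded_Icc _ _)
  obtain ⟨R0, hR0⟩ := hbdd.subset_closedBall 0
  set R : ℝ := max R0 0 with hRdef
  have hR : 0 ≤ R := le_max_right _ _
  have hUR : U ⊆ Set.Icc (-R) R := by
    intro x hx
    have hxs : x ∈ Function.support f := by
      rw [hU, Set.mem_setOf_eq] at hx; rw [Function.mem_support]
      intro h0; rw [h0] at hx; linarith
    have : x ∈ Metric.closedBall (0:ℝ) R0 := hR0 (hsupp ▸ hxs)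
    rw [Real.closedBall_eq_Icc] at this
    have hR0R : R0 ≤ R := le_max_left _ _
    exact ⟨by linarith [this.1], by linarith [this.2]⟩
  by_cases hv : vU = 0
  · -- degenerate case : the right-hand side is at least 1
    refine ⟨1, one_pos, 1, fun n hn => ?_⟩
    have hn1 : (1:ℝ) ≤ (n:ℝ) := by exact_mod_cast hn
    calc (Measure.pi fun _ : Fin n => volume.withDensity fun x => ENNReal.ofReal (f x)) _
        ≤ 1 := prob_le_one
      _ ≤ ENNReal.ofReal (1 * (n : ℝ) ^ (0.75 : ℝ) *
            Real.exp (-(n : ℝ) ^ (0.25 : ℝ) * vU * flow / 4)) := by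
          rw [hv]
          simp only [mul_zero, zero_mul, zero_div, neg_zero, Real.exp_zero, one_mul, mul_one]
          rw [ENNReal.one_le_ofReal]
          exact Real.one_le_rpow hn1 (by norm_num)
  · have hvpos : 0 < vU := lt_of_le_of_ne hvU0 (Ne.symm hv)
    refine ⟨16 * R / vU + 3, by positivity, 1, fun n hn => ?_⟩
    have hn1 : (1:ℝ) ≤ (n:ℝ) := by exact_mod_cast hn
    have hnpos : (0:ℝ) < (n:ℝ) := by linarith
    set σ : ℝ := (n : ℝ) ^ (-(0.75 : ℝ)) * vU with hσdef
    have hσpos : 0 < σ := mul_pos (Real.rpow_pos_of_pos hnpos _) hvpos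
    set M : ℕ := ⌈16 * R / σ⌉₊ + 2 with hMdef
    set t : ℕ → ℝ := fun j => -R + j * (σ/8) with ht
    -- inclusion of the event in a finite union of "no sample in grid interval" events
    have hincl : {ω : Fin n → ℝ | ∃ x ∈ {y ∈ U | Set.Icc (y - σ) (y + σ) ⊆ U},
          ((σ : ℝ) : EReal) < Gfun ω x}
        ⊆ ⋃ j ∈ Finset.range M, {ω : Fin n → ℝ |
            (Set.Icc (t j) (t j + σ/4) ⊆ U) ∧ ∀ k, ω k ∉ Set.Icc (t j) (t j + σ/4)} := by
      rintro ω ⟨x, ⟨hxU, hxIcc⟩, hG⟩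
      obtain ⟨a, haU, haR1, haR2, hnos⟩ :
          ∃ a : ℝ, Set.Ioo a (a + σ/2) ⊆ U ∧ -R ≤ a ∧ a ≤ R ∧
            ∀ k, ω k ∉ Set.Ioo a (a + σ/2) := by
        rcases gap_lemma ω x σ hG with hgap | hgap
        · refine ⟨x, ?_, (hUR hxU).1, (hUR hxU).2, hgap⟩
          intro y hy
          exact hxIcc ⟨by linarith [hy.1], by linarith [hy.2]⟩
        · refine ⟨x - σ/2, ?_, ?_, ?_, ?_⟩
          · intro y hy
            exact hxIcc ⟨by linarith [hy.1], by linarith [hy.2]⟩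
          · have hxm : x - σ ∈ U := hxIcc ⟨le_refl _, by linarith⟩
            have := (hUR hxm).1; linarith
          · have := (hUR hxU).2; linarith
          · have he : x - σ/2 + σ/2 = x := by ring
            rw [he]; exact hgap
      set u : ℝ := (a + R)/(σ/8) with hu
      have hu0 : 0 ≤ u := div_nonneg (by linarith) (by linarith)
      set j : ℕ := ⌊u⌋₊ + 1 with hj
      have htj1 : a < t j := by
        have h1 : u < (⌊u⌋₊ : ℝ) + 1 := Nat.lt_floor_add_one _
        have h2 : a + R < (j : ℝ) * (σ/8) := by
          rw [hj]; push_cast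
          calc a + R = u * (σ/8) := by rw [hu]; field_simp
            _ < ((⌊u⌋₊ : ℝ) + 1) * (σ/8) := by
                apply mul_lt_mul_of_pos_right h1; linarith
        simp only [ht]; linarith
      have htj2 : t j + σ/4 < a + σ/2 := by
        have h1 : (⌊u⌋₊ : ℝ) ≤ u := Nat.floor_le hu0
        have h2 : (j : ℝ) * (σ/8) ≤ a + R + σ/8 := by
          rw [hj]; push_cast
          calc ((⌊u⌋₊ : ℝ) + 1) * (σ/8) ≤ (u + 1) * (σ/8) := by
                apply mul_le_mul_of_nonneg_right (by linarith); linarith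
            _ = a + R + σ/8 := by rw [hu]; field_simp
        simp only [ht]; linarith
      have hJsub : Set.Icc (t j) (t j + σ/4) ⊆ Set.Ioo a (a + σ/2) := by
        intro y hy
        exact ⟨by linarith [hy.1], by linarith [hy.2]⟩
      have hjM : j < M := by
        have hle : u ≤ 16 * R / σ := by
          rw [hu]
          rw [div_le_div_iff₀ (by linarith) (by linarith)]
          nlinarith
        have : ⌊u⌋₊ ≤ ⌈(16 * R / σ : ℝ)⌉₊ :=
          le_trans (Nat.floor_le_ceil u) (Nat.ceil_le_ceil hle)
        omega
      refine Set.mem_biUnion (Finset.mem_range.mpr hjM) ?_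
      exact ⟨hJsub.trans haU, fun k hk => hnos k (hJsub hk)⟩
    refine le_trans (measure_mono hincl) ?_
    refine le_trans (measure_biUnion_finset_le _ _) ?_
    have hterm : ∀ j ∈ Finset.range M,
        (Measure.pi fun _ : Fin n => volume.withDensity fun x => ENNReal.ofReal (f x))
          {ω : Fin n → ℝ | (Set.Icc (t j) (t j + σ/4) ⊆ U) ∧
            ∀ k, ω k ∉ Set.Icc (t j) (t j + σ/4)}
        ≤ ENNReal.ofReal (Real.exp (-(flow * (σ/4))) ^ n) := by
      intro j _
      by_cases hc : Set.Icc (t j) (t j + σ/4) ⊆ U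
      · refine le_trans (measure_mono (fun ω hω => hω.2)) ?_
        apply no_sample_bound f hfm hμ1 (t j) (σ/4) flow (by linarith) hflow.le
        intro y hy
        have := hc hy
        rw [hU] at this
        exact this
      · have hemp : {ω : Fin n → ℝ | (Set.Icc (t j) (t j + σ/4) ⊆ U) ∧
            ∀ k, ω k ∉ Set.Icc (t j) (t j + σ/4)} = ∅ := by
          ext ω; simp only [Set.mem_setOf_eq, Set.mem_empty_iff_false, iff_false, not_and]
          intro h; exact absurd h hc
        rw [hemp, measure_empty]
        exact zero_le
    refine le_trans (Finset.sum_le_sum hterm) ?_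
    rw [Finset.sum_const, Finset.card_range, nsmul_eq_mul]
    -- arithmetic on the right-hand side
    have hσn : ((n:ℝ) ^ (-(0.75:ℝ))) * (n:ℝ) = (n:ℝ) ^ (0.25:ℝ) := by
      nth_rewrite 2 [← Real.rpow_one (n:ℝ)]
      rw [← Real.rpow_add hnpos]; norm_num
    have hexp : Real.exp (-(flow * (σ/4))) ^ n
        = Real.exp (-(n : ℝ) ^ (0.25 : ℝ) * vU * flow / 4) := by
      rw [← Real.exp_nat_mul]
      congr 1
      have h0 : (n:ℝ) * (-(flow * (σ/4)))
          = -((((n:ℝ) ^ (-(0.75:ℝ))) * (n:ℝ)) * vU * flow / 4) := by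
        rw [hσdef]; ring
      rw [h0, hσn]; ring
    have hM' : (M:ℝ) ≤ (16 * R / vU + 3) * (n:ℝ) ^ (0.75:ℝ) := by
      have h1 : (⌈(16 * R / σ : ℝ)⌉₊ : ℝ) < 16 * R / σ + 1 :=
        Nat.ceil_lt_add_one (by positivity)
      have h2 : 16 * R / σ = (16 * R / vU) * (n:ℝ) ^ (0.75:ℝ) := by
        rw [hσdef, Real.rpow_neg hnpos.le]
        have hne : (n:ℝ) ^ (0.75:ℝ) ≠ 0 := by positivity
        field_simp
      have h3 : (1:ℝ) ≤ (n:ℝ) ^ (0.75:ℝ) := Real.one_le_rpow hn1 (by norm_num)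
      have h4 : 0 ≤ 16 * R / vU := by positivity
      have h5 : 0 ≤ (16 * R / vU) * (n:ℝ) ^ (0.75:ℝ) := by positivity
      rw [hMdef]
      push_cast
      nlinarith
    calc (M : ENNReal) * ENNReal.ofReal (Real.exp (-(flow * (σ/4))) ^ n)
        = ENNReal.ofReal (M : ℝ) *
            ENNReal.ofReal (Real.exp (-(n : ℝ) ^ (0.25 : ℝ) * vU * flow / 4)) := by
          rw [ENNReal.ofReal_natCast, hexp]
      _ ≤ ENNReal.ofReal ((16 * R / vU + 3) * (n:ℝ) ^ (0.75:ℝ)) *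
            ENNReal.ofReal (Real.exp (-(n : ℝ) ^ (0.25 : ℝ) * vU * flow / 4)) := by
          exact mul_le_mul_left (ENNReal.ofReal_le_ofReal hM') _
      _ = ENNReal.ofReal ((16 * R / vU + 3) * (n : ℝ) ^ (0.75 : ℝ) *
            Real.exp (-(n : ℝ) ^ (0.25 : ℝ) * vU * flow / 4)) := by
          rw [← ENNReal.ofReal_mul (by positivity)]
end

section
/- Let A be a K×K real symmetric matrix with zero diagonal, let c : {1,…,n} → {1,…,K} be any map, and define the n×n matrix D̄ by D̄(i,j) = A(c(i), c(j)). Then the Gram matrix G(D̄), defined by G(D̄)(i,j) = D̄(i,j) − D̄(1,j) − D̄(i,1), has rank at most K − 1. -/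
/-- The Gram matrix of `D`: `G(D)(i,j) = D(i,j) - D(0,j) - D(i,0)` (row/column `0`
playing the role of the first row/column). -/
def gram {n : ℕ} [NeZero n] (D : Matrix (Fin n) (Fin n) ℝ) : Matrix (Fin n) (Fin n) ℝ :=
  Matrix.of fun i j => D i j - D 0 j - D i 0

/-- if `A` is a `K×K` real symmetric matrix with zero diagonal,
`c : Fin n → Fin K` any map, and `D̄(i,j) = A(c i, c j)`, then the Gram matrix
`G(D̄)` has rank at most `K - 1`. -/
theorem stmt7 {n K : ℕ} [NeZero n]
    (A : Matrix (Fin K) (Fin K) ℝ) (hA : A.IsSymm) (hdiag : ∀ k, A k k = 0)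
    (c : Fin n → Fin K) :
    (gram (Matrix.of fun i j => A (c i) (c j))).rank ≤ K - 1 := by
  set k0 : Fin K := c 0 with hk0
  set N : Matrix (Fin K) (Fin n) ℝ :=
    Matrix.of fun k j => A k (c j) - A k0 (c j) - A k k0 with hN
  set M : Matrix (Fin n) (Fin K) ℝ :=
    Matrix.of fun i k => if c i = k then (1 : ℝ) else 0 with hM
  have hfac : gram (Matrix.of fun i j => A (c i) (c j)) = M * N := by
    ext i j
    simp only [gram, Matrix.mul_apply, Matrix.of_apply, hM, hN]
    rw [Finset.sum_eq_single (c i)]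
    · simp [hk0]
    · intro b _ hb
      simp [Ne.symm hb]
    · intro h; exact absurd (Finset.mem_univ _) h
  rw [hfac]
  refine le_trans (Matrix.rank_mul_le_right M N) ?_
  -- rank N ≤ K - 1 because row k0 of N is zero
  have hrow : ∀ j, N k0 j = 0 := by
    intro j
    simp [hN, hdiag]
  have hsub : LinearMap.range N.mulVecLin ≤ LinearMap.ker (LinearMap.proj (R := ℝ)
      (φ := fun _ : Fin K => ℝ) k0) := by
    rintro _ ⟨v, rfl⟩
    simp only [LinearMap.mem_ker, LinearMap.proj_apply, Matrix.mulVecLin_apply,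
      Matrix.mulVec, dotProduct]
    simp [hrow]
  have hK : 0 < K := k0.pos
  have hkerrank : Module.finrank ℝ (LinearMap.ker (LinearMap.proj (R := ℝ)
      (φ := fun _ : Fin K => ℝ) k0)) = K - 1 := by
    have hsurj : Function.Surjective (LinearMap.proj (R := ℝ)
        (φ := fun _ : Fin K => ℝ) k0) := by
      intro x
      exact ⟨Pi.single k0 x, by simp⟩
    have := LinearMap.finrank_range_add_finrank_ker (LinearMap.proj (R := ℝ)
        (φ := fun _ : Fin K => ℝ) k0)
    rw [LinearMap.range_eq_top.mpr hsurj, finrank_top] at this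
    simp [Module.finrank_pi] at this
    omega
  calc N.rank = Module.finrank ℝ (LinearMap.range N.mulVecLin) := rfl
    _ ≤ Module.finrank ℝ (LinearMap.ker (LinearMap.proj (R := ℝ)
        (φ := fun _ : Fin K => ℝ) k0)) := Submodule.finrank_mono hsub
    _ = K - 1 := hkerrank
end

section
/- Let A be a K×K real symmetric matrix with zero diagonal, let c : {1,…,n} → {1,…,K} be surjective with c(1) = 1, and let n_k = |{i : c(i) = k}| > 0 for each k. Define the n×n matrix D̄ by D̄(i,j) = A(c(i), c(j)), its Gram matrix G(D̄)(i,j) = D̄(i,j) − D̄(1,j) − D̄(i,1), the K×K matrix G(A)(k,l) = A(k,l) − A(1,l) − A(k,1), and the K×K symmetric matrix Ã(k,l) = √(n_k n_l) · G(A)(k,l). Then a nonzero real number λ is an eigenvalue of G(D̄) if and only if λ is an eigenvalue of Ã. -/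
/-- with `A` a `K×K` symmetric hollow matrix, `c : Fin n → Fin K`
surjective with `c 0 = 0`, `n_k` the fiber cardinalities, `D̄(i,j) = A(c i, c j)`,
and `Ã(k.l) = √(n_k n_l) G(A)(k,l)`, a nonzero real `λ` is an eigenvalue of `G(D̄)`
iff it is an eigenvalue of `Ã`. -/
theorem stmt8 {n K : ℕ} [NeZero n] [NeZero K]
    (A : Matrix (Fin K) (Fin K) ℝ) (hA : A.IsSymm) (hdiag : ∀ k, A k k = 0)
    (c : Fin n → Fin K) (hc0 : c 0 = 0) (hcsurj : Function.Surjective c)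
    (ev : ℝ) (hev : ev ≠ 0) :
    (∃ v : Fin n → ℝ, v ≠ 0 ∧
        (gram (Matrix.of fun i j => A (c i) (c j))).mulVec v = ev • v) ↔
    (∃ w : Fin K → ℝ, w ≠ 0 ∧
        (Matrix.of fun k l =>
            Real.sqrt ((((Finset.univ.filter fun i => c i = k).card : ℝ)) *
              (((Finset.univ.filter fun i => c i = l).card : ℝ))) * gram A k l).mulVec w
          = ev • w) := by
  classical
  set B : Matrix (Fin K) (Fin K) ℝ := gram A with hB
  set N : Fin K → ℝ := fun k => ((Finset.univ.filter fun i => c i = k).card : ℝ) with hN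
  have hNpos : ∀ k, 0 < N k := by
    intro k
    have hne : (Finset.univ.filter fun i => c i = k).Nonempty := by
      obtain ⟨i, hi⟩ := hcsurj k
      exact ⟨i, by simp [hi]⟩
    have := Finset.card_pos.mpr hne
    simp only [hN]
    exact_mod_cast this
  have hsq : ∀ k, Real.sqrt (N k) ≠ 0 := fun k =>
    ne_of_gt (Real.sqrt_pos.mpr (hNpos k))
  have hmul : ∀ k, Real.sqrt (N k) * Real.sqrt (N k) = N k := fun k =>
    Real.mul_self_sqrt (hNpos k).le
  have hcan : ∀ (k : Fin K) (x : ℝ), Real.sqrt (N k) * (x / Real.sqrt (N k)) = x := by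
    intro k x
    rw [← mul_div_assoc, mul_div_cancel_left₀ _ (hsq k)]
  have hgram : ∀ i j, gram (Matrix.of fun i j => A (c i) (c j)) i j = B (c i) (c j) := by
    intro i j
    simp [gram, hB, hc0]
  have hfib : ∀ (f : Fin K → ℝ) (v : Fin n → ℝ),
      ∑ j, f (c j) * v j
        = ∑ k, f k * ∑ j ∈ Finset.univ.filter (fun j => c j = k), v j := by
    intro f v
    rw [← Finset.sum_fiberwise Finset.univ c (fun j => f (c j) * v j)]
    refine Finset.sum_congr rfl fun k _ => ?_
    rw [Finset.mul_sum]
    refine Finset.sum_congr rfl fun j hj => ?_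
    rw [(Finset.mem_filter.mp hj).2]
  constructor
  · rintro ⟨v, hv, heq⟩
    set u : Fin K → ℝ := fun k => ∑ j ∈ Finset.univ.filter (fun j => c j = k), v j with hu
    have key : ∀ i, ev * v i = ∑ k, B (c i) k * u k := by
      intro i
      have h1 : (gram (Matrix.of fun i j => A (c i) (c j))).mulVec v i
          = ∑ j, B (c i) (c j) * v j := by
        simp only [Matrix.mulVec, dotProduct]
        exact Finset.sum_congr rfl fun j _ => by rw [hgram]
      have h2 := congrFun heq i
      rw [h1, Pi.smul_apply, smul_eq_mul] at h2
      rw [← h2, hfib]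
    have keyu : ∀ l, ev * u l = N l * ∑ k, B l k * u k := by
      intro l
      have h : ev * u l = ∑ j ∈ Finset.univ.filter (fun j => c j = l), ev * v j := by
        rw [hu, Finset.mul_sum]
      rw [h]
      have h' : ∀ j ∈ Finset.univ.filter (fun j => c j = l),
          ev * v j = ∑ k, B l k * u k := by
        intro j hj
        rw [key j, (Finset.mem_filter.mp hj).2]
      rw [Finset.sum_congr rfl h', Finset.sum_const, nsmul_eq_mul]
    refine ⟨fun k => u k / Real.sqrt (N k), ?_, ?_⟩
    · intro hw
      have hu0 : ∀ k, u k = 0 := by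
        intro k
        have := congrFun hw k
        simp only [Pi.zero_apply, div_eq_zero_iff] at this
        rcases this with h | h
        · exact h
        · exact absurd h (hsq k)
      have hv0 : v = 0 := by
        funext i
        have := key i
        simp only [hu0, mul_zero, Finset.sum_const_zero] at this
        exact (mul_eq_zero.mp this).resolve_left hev
      exact hv hv0
    · funext l
      show ∑ k, Real.sqrt (N l * N k) * B l k * (u k / Real.sqrt (N k))
          = ev • (u l / Real.sqrt (N l))
      have hterm : ∀ k, Real.sqrt (N l * N k) * B l k * (u k / Real.sqrt (N k))
          = Real.sqrt (N l) * (B l k * u k) := by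
        intro k
        rw [Real.sqrt_mul (hNpos l).le,
          show Real.sqrt (N l) * Real.sqrt (N k) * B l k * (u k / Real.sqrt (N k))
            = Real.sqrt (N l) * (B l k * (Real.sqrt (N k) * (u k / Real.sqrt (N k))))
            from by ring,
          hcan k]
      rw [Finset.sum_congr rfl fun k _ => hterm k, ← Finset.mul_sum]
      have hsum : ∑ k, B l k * u k = ev * u l / N l := by
        rw [eq_div_iff (hNpos l).ne', mul_comm]
        exact (keyu l).symm
      have hrw : ev * u l / N l = ev * (u l / Real.sqrt (N l)) / Real.sqrt (N l) := by
        rw [← mul_div_assoc, div_div, hmul l]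
      rw [smul_eq_mul, hsum, hrw]
      exact hcan l _
  · rintro ⟨w, hw, heq⟩
    refine ⟨fun i => w (c i) / Real.sqrt (N (c i)), ?_, ?_⟩
    · intro hv
      obtain ⟨k, hk⟩ : ∃ k, w k ≠ 0 := by
        by_contra h
        push_neg at h
        exact hw (funext h)
      obtain ⟨i, hi⟩ := hcsurj k
      have := congrFun hv i
      simp only [Pi.zero_apply, hi, div_eq_zero_iff] at this
      rcases this with h | h
      · exact hk h
      · exact hsq k h
    · funext i
      have h1 : (gram (Matrix.of fun i j => A (c i) (c j))).mulVec
            (fun i => w (c i) / Real.sqrt (N (c i))) i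
          = ∑ k, B (c i) k * ∑ j ∈ Finset.univ.filter (fun j => c j = k),
              w (c j) / Real.sqrt (N (c j)) := by
        simp only [Matrix.mulVec, dotProduct]
        rw [← hfib (fun k => B (c i) k) (fun j => w (c j) / Real.sqrt (N (c j)))]
        exact Finset.sum_congr rfl fun j _ => by rw [hgram]
      have h2 : ∀ k, ∑ j ∈ Finset.univ.filter (fun j => c j = k),
          w (c j) / Real.sqrt (N (c j)) = Real.sqrt (N k) * w k := by
        intro k
        have h' : ∀ j ∈ Finset.univ.filter (fun j => c j = k),
            w (c j) / Real.sqrt (N (c j)) = w k / Real.sqrt (N k) := by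
          intro j hj
          rw [(Finset.mem_filter.mp hj).2]
        rw [Finset.sum_congr rfl h', Finset.sum_const, nsmul_eq_mul]
        show N k * (w k / Real.sqrt (N k)) = Real.sqrt (N k) * w k
        rw [show N k * (w k / Real.sqrt (N k))
            = (Real.sqrt (N k) * Real.sqrt (N k)) * (w k / Real.sqrt (N k))
            from by rw [hmul k],
          mul_assoc, hcan k]
      have h3 := congrFun heq (c i)
      have h3' : ∑ k, Real.sqrt (N (c i)) * Real.sqrt (N k) * B (c i) k * w k
          = ev * w (c i) := by
        simpa [Matrix.mulVec, dotProduct, hN,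
          Real.sqrt_mul (by positivity : (0:ℝ) ≤ ((Finset.univ.filter fun j => c j = c i).card : ℝ))]
          using h3
      have h4 : ∑ k, Real.sqrt (N (c i)) * Real.sqrt (N k) * B (c i) k * w k
          = Real.sqrt (N (c i)) * ∑ k, B (c i) k * (Real.sqrt (N k) * w k) := by
        rw [Finset.mul_sum]
        exact Finset.sum_congr rfl fun k _ => by ring
      have h5 : Real.sqrt (N (c i)) * ∑ k, B (c i) k * (Real.sqrt (N k) * w k)
          = ev * w (c i) := by rw [← h4, h3']
      have h6 : ∑ k, B (c i) k * (Real.sqrt (N k) * w k)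
          = ev * w (c i) / Real.sqrt (N (c i)) := by
        rw [eq_div_iff (hsq (c i)), mul_comm]
        exact h5
      rw [h1, Finset.sum_congr rfl fun k _ => by rw [h2 k], Pi.smul_apply, smul_eq_mul,
        h6, mul_div_assoc]
end

section
/- For any two n×n real symmetric matrices X and Y, ‖ |X| − |Y| ‖_F ≤ ‖ X − Y ‖_F, where |M| denotes the matrix absolute value of a symmetric matrix M, i.e., if M = QΛQ^T is an eigendecomposition then |M| = Q·Diag(|λ_1|,…,|λ_n|)·Q^T (equivalently |M| is the positive semidefinite square root of M²), and ‖·‖_F is the Frobenius norm. -/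
open Matrix
open scoped MatrixOrder

/-- Trace of a product of two real PSD matrices is nonnegative. -/
lemma stmt10_trace_mul_nonneg {n : ℕ} {A B : Matrix (Fin n) (Fin n) ℝ}
    (hA : A.PosSemidef) (hB : B.PosSemidef) : 0 ≤ (A * B).trace := by
  have hS := (CFC.sqrt_nonneg A).posSemidef
  have h1 : A * B = CFC.sqrt A * (CFC.sqrt A * B) := by
    rw [← mul_assoc, CFC.sqrt_mul_sqrt_self A hA.nonneg]
  rw [h1, trace_mul_comm]
  have h2 : CFC.sqrt A * B * CFC.sqrt A = (CFC.sqrt A)ᴴ * B * CFC.sqrt A := by rw [hS.1]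
  rw [mul_assoc] at h2 ⊢
  rw [← mul_assoc] at h2
  have hP : (CFC.sqrt A * B * CFC.sqrt A).PosSemidef := by
    rw [h2]; exact hB.conjTranspose_mul_mul_same _
  rw [← mul_assoc]
  have : ∀ i, 0 ≤ (CFC.sqrt A * B * CFC.sqrt A) i i := by
    intro i
    exact hP.diag_nonneg
  exact Finset.sum_nonneg fun i _ => this i

/-- If `A` is PSD with `A² = X²` and `X` symmetric, then `A ∓ X` are PSD. -/
lemma stmt10_abs_psd {n : ℕ} {X A : Matrix (Fin n) (Fin n) ℝ}
    (hX : X.IsSymm) (hA : A.PosSemidef) (hA2 : A * A = X * X) :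
    (A - X).PosSemidef ∧ (A + X).PosSemidef := by
  have hX' : X.IsHermitian := hX
  set U : Matrix (Fin n) (Fin n) ℝ := (hX'.eigenvectorUnitary : Matrix (Fin n) (Fin n) ℝ) with hUdef
  have hU : star U * U = 1 := Unitary.coe_star_mul_self hX'.eigenvectorUnitary
  have hUU : ∀ M : Matrix (Fin n) (Fin n) ℝ, star U * (U * M) = M := fun M => by
    rw [← Matrix.mul_assoc, hU, Matrix.one_mul]
  set e := hX'.eigenvalues
  have hspec : X = U * diagonal e * star U := by
    have := hX'.spectral_theorem
    simpa using this
  have key : ∀ d f : Fin n → ℝ,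
      (U * diagonal d * star U) * (U * diagonal f * star U)
        = U * diagonal (fun i => d i * f i) * star U := by
    intro d f
    simp only [Matrix.mul_assoc]
    rw [hUU]
    simp only [← Matrix.mul_assoc, diagonal_mul_diagonal]
  set P : Matrix (Fin n) (Fin n) ℝ := U * diagonal (fun i => |e i|) * star U with hP
  have hPpsd : P.PosSemidef := by
    have hd : (diagonal (fun i => |e i|) : Matrix (Fin n) (Fin n) ℝ).PosSemidef :=
      PosSemidef.diagonal (fun i => abs_nonneg _)
    simpa [hP, Matrix.star_eq_conjTranspose] using hd.mul_mul_conjTranspose_same U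
  have hPsq : P * P = X * X := by
    rw [hP, hspec, key, key]
    simp only [abs_mul_abs_self]
  have hAP : A = P := (CFC.sq_eq_sq_iff A P hA.nonneg hPpsd.nonneg).mp (by rw [pow_two, pow_two, hPsq, hA2])
  have split : ∀ d f : Fin n → ℝ,
      U * diagonal (fun i => d i + f i) * star U
        = U * diagonal d * star U + U * diagonal f * star U := by
    intro d f
    rw [show (diagonal (fun i => d i + f i) : Matrix (Fin n) (Fin n) ℝ)
        = diagonal d + diagonal f from by rw [← diagonal_add],
      Matrix.mul_add, Matrix.add_mul]
  constructor
  · have hd : (diagonal (fun i => |e i| - e i) : Matrix (Fin n) (Fin n) ℝ).PosSemidef :=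
      PosSemidef.diagonal (fun i => by
        simp only [Pi.zero_apply]; linarith [le_abs_self (e i)])
    have h := hd.mul_mul_conjTranspose_same U
    have heq : U * diagonal (fun i => |e i| - e i) * Uᴴ = A - X := by
      rw [← Matrix.star_eq_conjTranspose, hAP, hP, hspec,
        show (diagonal (fun i => |e i| - e i) : Matrix (Fin n) (Fin n) ℝ)
          = diagonal (fun i => |e i|) - diagonal e from by rw [← diagonal_sub],
        Matrix.mul_sub, Matrix.sub_mul]
    rwa [heq] at h
  · have hd : (diagonal (fun i => |e i| + e i) : Matrix (Fin n) (Fin n) ℝ).PosSemidef :=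
      PosSemidef.diagonal (fun i => by
        simp only [Pi.zero_apply]; linarith [neg_abs_le (e i)])
    have h := hd.mul_mul_conjTranspose_same U
    have heq : U * diagonal (fun i => |e i| + e i) * Uᴴ = A + X := by
      rw [← Matrix.star_eq_conjTranspose, hAP, hP, hspec, split]
    rwa [heq] at h

/-- Frobenius norm of a real matrix. -/
noncomputable def frob {n : ℕ} (M : Matrix (Fin n) (Fin n) ℝ) : ℝ :=
  Real.sqrt (∑ i, ∑ j, M i j ^ 2)

/-- for real symmetric `X, Y`, `‖ |X| - |Y| ‖_F ≤ ‖X - Y‖_F`, where the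
matrix absolute value `|M|` is characterized as the (unique) positive semidefinite
square root of `M²`. -/
theorem stmt10 {n : ℕ} (X Y absX absY : Matrix (Fin n) (Fin n) ℝ)
    (hX : X.IsSymm) (hY : Y.IsSymm)
    (hAX : absX.PosSemidef) (hAY : absY.PosSemidef)
    (hAX2 : absX * absX = X * X) (hAY2 : absY * absY = Y * Y) :
    frob (absX - absY) ≤ frob (X - Y) := by
  have habsX := stmt10_abs_psd hX hAX hAX2
  have habsY := stmt10_abs_psd hY hAY hAY2
  have hsum : ∀ M : Matrix (Fin n) (Fin n) ℝ, M.IsSymm →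
      ∑ i, ∑ j, M i j ^ 2 = (M * M).trace := by
    intro M hM
    rw [Matrix.trace]
    simp only [Matrix.diag, Matrix.mul_apply]
    apply Finset.sum_congr rfl
    intro i _
    apply Finset.sum_congr rfl
    intro j _
    rw [pow_two]
    congr 1
    exact (congrFun (congrFun hM j) i).symm ▸ rfl
  unfold frob
  apply Real.sqrt_le_sqrt
  have hsX : absX.IsSymm := hAX.isHermitian
  have hsY : absY.IsSymm := hAY.isHermitian
  rw [hsum _ (hsX.sub hsY), hsum _ (hX.sub hY)]
  have t1 := stmt10_trace_mul_nonneg habsX.1 habsY.2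
  have t2 := stmt10_trace_mul_nonneg habsX.2 habsY.1
  have e1 : (absX - X) * (absY + Y)
      = absX * absY + absX * Y - X * absY - X * Y := by noncomm_ring
  have e2 : (absX + X) * (absY - Y)
      = absX * absY - absX * Y + X * absY - X * Y := by noncomm_ring
  rw [e1] at t1; rw [e2] at t2
  simp only [trace_add, trace_sub] at t1 t2
  have eD : (absX - absY) * (absX - absY)
      = absX * absX - absX * absY - absY * absX + absY * absY := by noncomm_ring
  have eC : (X - Y) * (X - Y) = X * X - X * Y - Y * X + Y * Y := by noncomm_ring
  rw [eD, eC, hAX2, hAY2]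
  simp only [trace_add, trace_sub]
  have c1 : (absY * absX).trace = (absX * absY).trace := trace_mul_comm _ _
  have c2 : (Y * X).trace = (X * Y).trace := trace_mul_comm _ _
  rw [c1, c2]
  linarith
end

section
/- Let X and Y be n×n real symmetric positive semidefinite matrices, both of rank k ≥ 1. Let λ_{min⁺}(X) and λ_{min⁺}(Y) denote their minimum positive eigenvalues, and let √X, √Y denote their unique positive semidefinite square roots. Then ‖ √X − √Y ‖_F ≤ ‖ X − Y ‖_F / min( √(λ_{min⁺}(X)), √(λ_{min⁺}(Y)) ). -/
open Matrix

/-- `lam` is the minimum positive eigenvalue of the matrix `M`. -/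
def IsMinPosEigenvalue {n : ℕ} (M : Matrix (Fin n) (Fin n) ℝ) (lam : ℝ) : Prop :=
  0 < lam ∧ (∃ v : Fin n → ℝ, v ≠ 0 ∧ M.mulVec v = lam • v) ∧
    ∀ t : ℝ, 0 < t → (∃ v : Fin n → ℝ, v ≠ 0 ∧ M.mulVec v = t • v) → lam ≤ t

/-- Sum of squared entries: trace formula. -/
lemma sumsq_eq_trace {n : ℕ} (M : Matrix (Fin n) (Fin n) ℝ) :
    ∑ i, ∑ j, M i j ^ 2 = Matrix.trace (Mᵀ * M) := by
  rw [Matrix.trace, Finset.sum_comm]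
  simp [Matrix.diag, Matrix.mul_apply, sq]

/-- Orthogonal invariance of the sum of squared entries. -/
lemma sumsq_conj {n : ℕ} (U V M : Matrix (Fin n) (Fin n) ℝ)
    (hU : U * Uᵀ = 1) (hV : V * Vᵀ = 1) :
    ∑ i, ∑ j, (Uᵀ * M * V) i j ^ 2 = ∑ i, ∑ j, M i j ^ 2 := by
  rw [sumsq_eq_trace, sumsq_eq_trace]
  have h1 : (Uᵀ * M * V)ᵀ * (Uᵀ * M * V) = Vᵀ * (Mᵀ * M) * V := by
    simp only [Matrix.transpose_mul, Matrix.transpose_transpose, ← Matrix.mul_assoc]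
    rw [show Vᵀ * Mᵀ * U * Uᵀ = Vᵀ * Mᵀ * (U * Uᵀ) from by rw [Matrix.mul_assoc], hU,
      Matrix.mul_one]
  rw [h1, Matrix.trace_mul_cycle, hV, Matrix.one_mul]

set_option maxHeartbeats 1000000 in
/-- for psd symmetric `X, Y` of common rank `k ≥ 1`, with psd square
roots `sX, sY` and minimum positive eigenvalues `lamX, lamY`,
`‖√X - √Y‖_F ≤ ‖X - Y‖_F / min(√lamX, √lamY)`. -/
theorem stmt11 {n : ℕ} (k : ℕ) (hk : 1 ≤ k)
    (X Y sX sY : Matrix (Fin n) (Fin n) ℝ)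
    (hX : X.PosSemidef) (hY : Y.PosSemidef)
    (hrX : X.rank = k) (hrY : Y.rank = k)
    (hsX : sX.PosSemidef) (hsY : sY.PosSemidef)
    (hsX2 : sX * sX = X) (hsY2 : sY * sY = Y)
    (lamX lamY : ℝ)
    (hlamX : IsMinPosEigenvalue X lamX) (hlamY : IsMinPosEigenvalue Y lamY) :
    frob (sX - sY) ≤ frob (X - Y) / min (Real.sqrt lamX) (Real.sqrt lamY) := by
  obtain ⟨hlX, -, hminX⟩ := hlamX
  obtain ⟨hlY, -, hminY⟩ := hlamY
  have hXh := hsX.1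
  have hYh := hsY.1
  set U : Matrix (Fin n) (Fin n) ℝ := (hXh.eigenvectorUnitary : Matrix (Fin n) (Fin n) ℝ) with hUdef
  set V : Matrix (Fin n) (Fin n) ℝ := (hYh.eigenvectorUnitary : Matrix (Fin n) (Fin n) ℝ) with hVdef
  set a := hXh.eigenvalues with hadef
  set b := hYh.eigenvalues with hbdef
  have hstarU : star U = Uᵀ := by ext i j; simp [Matrix.star_apply]
  have hstarV : star V = Vᵀ := by ext i j; simp [Matrix.star_apply]
  have hUU : U * Uᵀ = 1 := by
    rw [← hstarU]; exact Matrix.mem_unitaryGroup_iff.mp hXh.eigenvectorUnitary.2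
  have hUU' : Uᵀ * U = 1 := by
    rw [← hstarU]; exact Matrix.mem_unitaryGroup_iff'.mp hXh.eigenvectorUnitary.2
  have hVV : V * Vᵀ = 1 := by
    rw [← hstarV]; exact Matrix.mem_unitaryGroup_iff.mp hYh.eigenvectorUnitary.2
  -- diagonalization
  have hdX : Uᵀ * sX * U = diagonal a := by
    rw [← hstarU]; simpa using hXh.conjStarAlgAut_star_eigenvectorUnitary
  have hdY : Vᵀ * sY * V = diagonal b := by
    rw [← hstarV]; simpa using hYh.conjStarAlgAut_star_eigenvectorUnitary
  have hsXU : Uᵀ * sX = diagonal a * Uᵀ := by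
    calc Uᵀ * sX = (Uᵀ * sX * U) * Uᵀ := by
          rw [Matrix.mul_assoc, Matrix.mul_assoc, hUU, Matrix.mul_one]
      _ = diagonal a * Uᵀ := by rw [hdX]
  have hsYV : sY * V = V * diagonal b := by
    calc sY * V = V * (Vᵀ * sY * V) := by
          rw [← Matrix.mul_assoc, ← Matrix.mul_assoc, hVV, Matrix.one_mul]
      _ = V * diagonal b := by rw [hdY]
  set G : Matrix (Fin n) (Fin n) ℝ := Uᵀ * V with hGdef
  -- entrywise formulas
  have hFa : ∀ i j, (Uᵀ * (sX - sY) * V) i j = (a i - b j) * G i j := by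
    intro i j
    have : Uᵀ * (sX - sY) * V = diagonal a * G - G * diagonal b := by
      rw [Matrix.mul_sub, Matrix.sub_mul]
      congr 1
      · rw [hsXU, Matrix.mul_assoc]
      · rw [Matrix.mul_assoc, hsYV, ← Matrix.mul_assoc]
    rw [this]
    simp only [Matrix.sub_apply, Matrix.diagonal_mul, Matrix.mul_diagonal]
    ring
  have hEa : ∀ i j, (Uᵀ * (X - Y) * V) i j = (a i ^ 2 - b j ^ 2) * G i j := by
    intro i j
    have : Uᵀ * (X - Y) * V = diagonal a * (diagonal a * G) - G * diagonal b * diagonal b := by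
      rw [← hsX2, ← hsY2, Matrix.mul_sub, Matrix.sub_mul]
      congr 1
      · calc Uᵀ * (sX * sX) * V = (Uᵀ * sX) * sX * V := by simp only [Matrix.mul_assoc]
          _ = (diagonal a * Uᵀ) * sX * V := by rw [hsXU]
          _ = diagonal a * (Uᵀ * sX) * V := by simp only [Matrix.mul_assoc]
          _ = diagonal a * (diagonal a * Uᵀ) * V := by rw [hsXU]
          _ = diagonal a * (diagonal a * G) := by
              rw [hGdef]; simp only [Matrix.mul_assoc]
      · calc Uᵀ * (sY * sY) * V = Uᵀ * (sY * (sY * V)) := by simp only [Matrix.mul_assoc]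
          _ = Uᵀ * (sY * (V * diagonal b)) := by rw [hsYV]
          _ = Uᵀ * ((sY * V) * diagonal b) := by simp only [Matrix.mul_assoc]
          _ = Uᵀ * ((V * diagonal b) * diagonal b) := by rw [hsYV]
          _ = G * diagonal b * diagonal b := by
              rw [hGdef]; simp only [Matrix.mul_assoc]
    rw [this]
    simp only [Matrix.sub_apply, Matrix.diagonal_mul, Matrix.mul_diagonal]
    ring
  -- nonzero eigenvalues of the roots are bounded below
  have hroot : ∀ (s Z : Matrix (Fin n) (Fin n) ℝ) (hs : s.PosSemidef) (hsZ : s * s = Z)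
      (lam : ℝ) (hmin : ∀ t : ℝ, 0 < t → (∃ v : Fin n → ℝ, v ≠ 0 ∧ Z.mulVec v = t • v) → lam ≤ t)
      (i : Fin n), hs.1.eigenvalues i ≠ 0 → Real.sqrt lam ≤ hs.1.eigenvalues i := by
    intro s Z hs hsZ lam hmin i hi
    have ha0 : 0 ≤ hs.1.eigenvalues i := hs.eigenvalues_nonneg i
    have hapos : 0 < hs.1.eigenvalues i := lt_of_le_of_ne ha0 (Ne.symm hi)
    have hav := hs.1.mulVec_eigenvectorBasis i
    have hu0 : (⇑(hs.1.eigenvectorBasis i) : Fin n → ℝ) ≠ 0 := by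
      have h := hs.1.eigenvectorBasis.orthonormal.ne_zero i
      intro hc; apply h; ext x; exact congrFun hc x
    have hZu : Z.mulVec (⇑(hs.1.eigenvectorBasis i)) =
        (hs.1.eigenvalues i ^ 2) • (⇑(hs.1.eigenvectorBasis i)) := by
      rw [← hsZ, ← Matrix.mulVec_mulVec, hav, Matrix.mulVec_smul, hav, smul_smul, sq]
    have hle : lam ≤ hs.1.eigenvalues i ^ 2 :=
      hmin _ (pow_pos hapos 2) ⟨_, hu0, hZu⟩
    calc Real.sqrt lam ≤ Real.sqrt (hs.1.eigenvalues i ^ 2) := Real.sqrt_le_sqrt hle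
      _ = hs.1.eigenvalues i := by rw [Real.sqrt_sq ha0]
  have haX : ∀ i, a i ≠ 0 → Real.sqrt lamX ≤ a i := hroot sX X hsX hsX2 lamX hminX
  have haY : ∀ j, b j ≠ 0 → Real.sqrt lamY ≤ b j := hroot sY Y hsY hsY2 lamY hminY
  set c := min (Real.sqrt lamX) (Real.sqrt lamY) with hcdef
  have hc : 0 < c := lt_min (Real.sqrt_pos.mpr hlX) (Real.sqrt_pos.mpr hlY)
  -- key entrywise inequality
  have hkey : ∀ i j, c * |a i - b j| ≤ |a i ^ 2 - b j ^ 2| := by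
    intro i j
    rcases eq_or_ne (a i) (b j) with h | h
    · simp [h]
    · have ha0 : 0 ≤ a i := hsX.eigenvalues_nonneg i
      have hb0 : 0 ≤ b j := hsY.eigenvalues_nonneg j
      have hab : c ≤ a i + b j := by
        rcases eq_or_ne (a i) 0 with h0 | h0
        · have hb : b j ≠ 0 := by rw [h0] at h; exact (Ne.symm h)
          have := haY j hb
          calc c ≤ Real.sqrt lamY := min_le_right _ _
            _ ≤ b j := this
            _ ≤ a i + b j := by linarith
        · have := haX i h0
          calc c ≤ Real.sqrt lamX := min_le_left _ _
            _ ≤ a i := this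
            _ ≤ a i + b j := by linarith
      have habs : |a i ^ 2 - b j ^ 2| = (a i + b j) * |a i - b j| := by
        rw [← abs_of_nonneg (by linarith : (0:ℝ) ≤ a i + b j), ← abs_mul]
        congr 1; ring
      rw [habs]
      exact mul_le_mul_of_nonneg_right hab (abs_nonneg _)
  -- sum inequality
  have hsum : c ^ 2 * (∑ i, ∑ j, (sX - sY) i j ^ 2) ≤ ∑ i, ∑ j, (X - Y) i j ^ 2 := by
    rw [← sumsq_conj U V (sX - sY) hUU hVV, ← sumsq_conj U V (X - Y) hUU hVV,
      Finset.mul_sum]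
    apply Finset.sum_le_sum
    intro i _
    rw [Finset.mul_sum]
    apply Finset.sum_le_sum
    intro j _
    rw [hFa i j, hEa i j]
    calc c ^ 2 * ((a i - b j) * G i j) ^ 2
        = (c * |a i - b j|) ^ 2 * G i j ^ 2 := by rw [mul_pow, mul_pow, sq_abs]; ring
      _ ≤ |a i ^ 2 - b j ^ 2| ^ 2 * G i j ^ 2 := by
          apply mul_le_mul_of_nonneg_right _ (sq_nonneg _)
          exact pow_le_pow_left₀ (by positivity) (hkey i j) 2
      _ = ((a i ^ 2 - b j ^ 2) * G i j) ^ 2 := by rw [sq_abs, mul_pow]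
  -- conclude
  rw [le_div_iff₀ hc]
  unfold frob
  have hS1 : 0 ≤ ∑ i, ∑ j, (sX - sY) i j ^ 2 := by positivity
  calc Real.sqrt (∑ i, ∑ j, (sX - sY) i j ^ 2) * c
      = Real.sqrt ((∑ i, ∑ j, (sX - sY) i j ^ 2) * c ^ 2) := by
        rw [Real.sqrt_mul hS1, Real.sqrt_sq hc.le]
    _ ≤ Real.sqrt (∑ i, ∑ j, (X - Y) i j ^ 2) := by
        apply Real.sqrt_le_sqrt; linarith [hsum]
end

section
/- Let M be an n×n real symmetric matrix of rank L whose nonzero eigenvalues λ_1, …, λ_L all satisfy α ≤ |λ_ℓ| ≤ β for some 0 < α ≤ β, with corresponding orthonormal eigenvectors q_1, …, q_L. For each index m define b_m = (√|λ_1| · q_1(m), …, √|λ_L| · q_L(m)) ∈ ℝ^L. Then for any indices i, j: ‖b_i − b_j‖ ≥ (√α / β) · ‖M(i,:) − M(j,:)‖, where ‖M(i,:) − M(j,:)‖ is the Euclidean norm of the difference of rows i and j of M. -/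
/-- let `M` be symmetric of rank `L`, with orthonormal eigenvectors
`q 1, …, q L` whose (nonzero) eigenvalues `lam a` all satisfy `α ≤ |lam a| ≤ β`
(`0 < α`), and let `b m = (√|lam 1| q 1 m, …, √|lam L| q L m) ∈ ℝ^L`. Then for all
indices `i, j`, `‖b i - b j‖ ≥ (√α / β) ‖M(i,:) - M(j,:)‖`. -/
theorem stmt13 {n L : ℕ} (M : Matrix (Fin n) (Fin n) ℝ) (hM : M.IsSymm)
    (hrank : M.rank = L)
    (q : Fin L → (Fin n → ℝ)) (lam : Fin L → ℝ)
    (hortho : ∀ a b : Fin L, (∑ m, q a m * q b m) = if a = b then (1 : ℝ) else 0)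
    (heig : ∀ a, M.mulVec (q a) = lam a • q a)
    (α β : ℝ) (hα : 0 < α) (hbounds : ∀ a, α ≤ |lam a| ∧ |lam a| ≤ β)
    (i j : Fin n) :
    Real.sqrt α / β * Real.sqrt (∑ m, (M i m - M j m) ^ 2) ≤
      Real.sqrt (∑ a : Fin L,
        (Real.sqrt |lam a| * q a i - Real.sqrt |lam a| * q a j) ^ 2) := by
  classical
  have hlamne : ∀ a, lam a ≠ 0 := by
    intro a h
    have := (hbounds a).1
    rw [h, abs_zero] at this
    linarith
  -- dot-product extraction helper
  have hdot : ∀ (g : Fin L → ℝ) (b : Fin L),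
      ∑ m, (∑ a, g a * q a m) * q b m = g b := by
    intro g b
    have : ∀ m, (∑ a, g a * q a m) * q b m = ∑ a, g a * (q a m * q b m) := by
      intro m; rw [Finset.sum_mul]; exact Finset.sum_congr rfl fun a _ => by ring
    simp_rw [this]
    rw [Finset.sum_comm]
    simp_rw [← Finset.mul_sum, hortho]
    simp
  -- linear independence of q
  have hlin : LinearIndependent ℝ q := by
    rw [Fintype.linearIndependent_iff]
    intro g hg b
    have h0 := hdot g b
    have : (∑ a, g a * q a ·) = (0 : Fin n → ℝ) := by
      funext m
      have := congrFun hg m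
      simpa [Finset.sum_apply] using this
    rw [show (∑ m, (∑ a, g a * q a m) * q b m) = 0 by
      refine Finset.sum_eq_zero fun m _ => ?_
      have := congrFun this m
      simp only [Finset.sum_apply, Pi.zero_apply] at this ⊢
      rw [this]; simp] at h0
    exact h0.symm
  -- q a ∈ range of mulVecLin
  have hmem : ∀ a, q a ∈ LinearMap.range M.mulVecLin := by
    intro a
    refine ⟨(lam a)⁻¹ • q a, ?_⟩
    rw [Matrix.mulVecLin_apply, Matrix.mulVec_smul, heig, smul_smul,
      inv_mul_cancel₀ (hlamne a), one_smul]
  have hle : Submodule.span ℝ (Set.range q) ≤ LinearMap.range M.mulVecLin := by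
    rw [Submodule.span_le]
    rintro _ ⟨a, rfl⟩
    exact hmem a
  have hspan : Submodule.span ℝ (Set.range q) = LinearMap.range M.mulVecLin := by
    refine Submodule.eq_of_le_of_finrank_le hle ?_
    rw [finrank_span_eq_card hlin, Fintype.card_fin]
    exact le_of_eq hrank
  -- representation of M via eigenvectors
  have hMrep : ∀ k m : Fin n, M k m = ∑ a, lam a * q a m * q a k := by
    intro k m
    have hcol : (fun k => M k m) ∈ Submodule.span ℝ (Set.range q) := by
      rw [hspan]
      refine ⟨Pi.single m 1, ?_⟩
      rw [Matrix.mulVecLin_apply, Matrix.mulVec_single]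
      funext k; simp
    obtain ⟨c, hc⟩ := (Submodule.mem_span_range_iff_exists_fun ℝ).mp hcol
    have hcb : ∀ b, c b = lam b * q b m := by
      intro b
      have h1 : ∑ k, (∑ a, c a * q a k) * q b k = c b := hdot c b
      have h2 : ∀ k, (∑ a, c a * q a k) = M k m := by
        intro k
        have := congrFun hc k
        simpa [Finset.sum_apply] using this
      simp_rw [h2] at h1
      have h3 : ∑ k, M k m * q b k = lam b * q b m := by
        have h4 : ∀ k, M k m = M m k := fun k => Matrix.IsSymm.apply hM m k
        simp_rw [h4]
        have := congrFun (heig b) m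
        simpa [Matrix.mulVec, dotProduct] using this
      rw [← h1, h3]
    have := congrFun hc k
    simp only [Finset.sum_apply, Pi.smul_apply, smul_eq_mul] at this
    rw [← this]
    exact Finset.sum_congr rfl fun a _ => by rw [hcb a]
  set d : Fin L → ℝ := fun a => q a i - q a j with hd
  -- orthonormal expansion helper
  have hexp : ∀ x : Fin L → ℝ, ∑ m, (∑ a, x a * q a m) ^ 2 = ∑ a, (x a) ^ 2 := by
    intro x
    have h1 : ∀ m, (∑ a, x a * q a m) ^ 2
        = ∑ a, ∑ b, (x a * x b) * (q a m * q b m) := by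
      intro m
      rw [sq, Finset.sum_mul_sum]
      exact Finset.sum_congr rfl fun a _ => Finset.sum_congr rfl fun b _ => by ring
    simp_rw [h1]
    rw [Finset.sum_comm]
    have h2 : ∀ a, ∑ m, ∑ b, (x a * x b) * (q a m * q b m) = (x a) ^ 2 := by
      intro a
      rw [Finset.sum_comm]
      simp_rw [← Finset.mul_sum, hortho]
      simp [sq]
    exact Finset.sum_congr rfl fun a _ => h2 a
  have hdiff : ∀ m, M i m - M j m = ∑ a, (lam a * d a) * q a m := by
    intro m
    rw [hMrep i m, hMrep j m, ← Finset.sum_sub_distrib]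
    exact Finset.sum_congr rfl fun a _ => by simp only [hd]; ring
  have hsum1 : ∑ m, (M i m - M j m) ^ 2 = ∑ a, (lam a * d a) ^ 2 := by
    simp_rw [hdiff]
    exact hexp _
  have hsum2 : ∑ a : Fin L, (Real.sqrt |lam a| * q a i - Real.sqrt |lam a| * q a j) ^ 2
      = ∑ a, |lam a| * (d a) ^ 2 := by
    refine Finset.sum_congr rfl fun a _ => ?_
    have : Real.sqrt |lam a| * q a i - Real.sqrt |lam a| * q a j
        = Real.sqrt |lam a| * d a := by simp only [hd]; ring
    rw [this, mul_pow, Real.sq_sqrt (abs_nonneg _)]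
  rw [hsum1, hsum2]
  rcases isEmpty_or_nonempty (Fin L) with hL | hL
  · simp
  · obtain ⟨a0⟩ := hL
    have hβ : 0 < β := lt_of_lt_of_le hα (le_trans (hbounds a0).1 (hbounds a0).2)
    have hkey : α / β ^ 2 * ∑ a, (lam a * d a) ^ 2 ≤ ∑ a, |lam a| * (d a) ^ 2 := by
      rw [Finset.mul_sum]
      refine Finset.sum_le_sum fun a _ => ?_
      have h1 := (hbounds a).1
      have h2 := (hbounds a).2
      have habs : lam a ^ 2 = |lam a| ^ 2 := (sq_abs _).symm
      have hd2 : (0:ℝ) ≤ (d a) ^ 2 := sq_nonneg _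
      rw [div_mul_eq_mul_div, div_le_iff₀ (by positivity)]
      have hA : α * |lam a| ≤ β * β :=
        mul_le_mul (h1.trans h2) h2 (abs_nonneg _) hβ.le
      have h5 : α * lam a ^ 2 ≤ |lam a| * β ^ 2 := by
        nlinarith [abs_nonneg (lam a)]
      nlinarith [mul_le_mul_of_nonneg_right h5 hd2]
    calc Real.sqrt α / β * Real.sqrt (∑ a, (lam a * d a) ^ 2)
        = Real.sqrt (α / β ^ 2 * ∑ a, (lam a * d a) ^ 2) := by
          rw [Real.sqrt_mul (by positivity), Real.sqrt_div hα.le,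
            Real.sqrt_sq hβ.le]
      _ ≤ Real.sqrt (∑ a, |lam a| * (d a) ^ 2) := Real.sqrt_le_sqrt hkey
end

section
/- Let M̄ and E be n×n real symmetric matrices and M = M̄ + E. Suppose indices i, i' satisfy M̄(i,:) = M̄(i',:). Let q be a unit-norm eigenvector of M with eigenvalue λ ≠ 0. Then √|λ| · |q(i) − q(i')| ≤ 2 ‖E‖_{2,∞} / √|λ|, where ‖E‖_{2,∞} = max_m ‖E(m,:)‖_2 is the maximum Euclidean norm of a row of E. -/
/-- let `M = M̄ + E` with `M̄, E` symmetric, rows `i, i'` of `M̄` equal,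
and `q` a unit-norm eigenvector of `M` with eigenvalue `λ ≠ 0`. Then
`√|λ| |q i - q i'| ≤ 2 ‖E‖_{2,∞} / √|λ|` with `‖E‖_{2,∞}` the maximum row norm. -/
theorem stmt14 {n : ℕ} (Mbar E : Matrix (Fin n) (Fin n) ℝ)
    (hMbar : Mbar.IsSymm) (hE : E.IsSymm)
    (i i' : Fin n) (hii' : ∀ m, Mbar i m = Mbar i' m)
    (q : Fin n → ℝ) (hq : ∑ m, q m ^ 2 = 1)
    (ev : ℝ) (hev : ev ≠ 0)
    (heig : (Mbar + E).mulVec q = ev • q) :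
    Real.sqrt |ev| * |q i - q i'| ≤
      2 * (⨆ m : Fin n, Real.sqrt (∑ l, E m l ^ 2)) / Real.sqrt |ev| := by
  have : Nonempty (Fin n) := ⟨i⟩
  set R := ⨆ m : Fin n, Real.sqrt (∑ l, E m l ^ 2) with hR
  -- row sum bound
  have rowbound : ∀ j : Fin n, |∑ m, E j m * q m| ≤ R := by
    intro j
    have cs2 : (∑ m, E j m * q m) ^ 2 ≤ (∑ m, E j m ^ 2) * ∑ m, q m ^ 2 := by
      simpa [mul_pow] using Finset.sum_mul_sq_le_sq_mul_sq Finset.univ (fun m => E j m) q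
    have h1 : |∑ m, E j m * q m| ≤ Real.sqrt (∑ m, E j m ^ 2) := by
      rw [← Real.sqrt_sq_eq_abs]
      apply Real.sqrt_le_sqrt
      calc (∑ m, E j m * q m) ^ 2 ≤ (∑ m, E j m ^ 2) * ∑ m, q m ^ 2 := cs2
        _ = ∑ m, E j m ^ 2 := by rw [hq, mul_one]
    have h2 : Real.sqrt (∑ m, E j m ^ 2) ≤ R := by
      apply le_ciSup (f := fun m : Fin n => Real.sqrt (∑ l, E m l ^ 2))
      exact (Set.finite_range _).bddAbove
    exact h1.trans h2
  -- eigenvalue relation at i and i'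
  have key : ∀ j : Fin n, ev * q j = ∑ m, Mbar j m * q m + ∑ m, E j m * q m := by
    intro j
    have := congrFun heig j
    simp [Matrix.mulVec, dotProduct, Matrix.add_apply, add_mul,
      Finset.sum_add_distrib] at this
    simpa using this.symm
  have diff : ev * (q i - q i') = (∑ m, E i m * q m) - ∑ m, E i' m * q m := by
    have := key i
    have h' := key i'
    have hM : (∑ m, Mbar i m * q m) = ∑ m, Mbar i' m * q m :=
      Finset.sum_congr rfl (fun m _ => by rw [hii' m])
    rw [mul_sub, this, h', hM]; ring
  have main : |ev| * |q i - q i'| ≤ 2 * R := by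
    have : |ev * (q i - q i')| ≤ 2 * R := by
      rw [diff]
      calc |(∑ m, E i m * q m) - ∑ m, E i' m * q m|
          ≤ |∑ m, E i m * q m| + |∑ m, E i' m * q m| := abs_sub _ _
        _ ≤ R + R := add_le_add (rowbound i) (rowbound i')
        _ = 2 * R := by ring
    rwa [abs_mul] at this
  have hpos : 0 < Real.sqrt |ev| := Real.sqrt_pos.mpr (abs_pos.mpr hev)
  rw [le_div_iff₀ hpos]
  calc Real.sqrt |ev| * |q i - q i'| * Real.sqrt |ev|
      = |ev| * |q i - q i'| := by
        rw [mul_right_comm, Real.mul_self_sqrt (abs_nonneg ev)]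
    _ ≤ 2 * R := main
end

section
/- Let b_1, …, b_n ∈ ℝ^d, let λ > 0, and let (x_1*, …, x_n*) be the unique minimizer of the sum-of-norms clustering objective (1/2)∑_{i=1}^n ‖x_i − b_i‖² + λ ∑_{1≤i<j≤n} ‖x_i − x_j‖ over (x_1,…,x_n) ∈ (ℝ^d)^n. Let C_1, …, C_K partition {1,…,n}. (a) For any k, if λ ≥ ‖b_i − b_j‖ / |C_k| for all i, j ∈ C_k, then x_i* = x_j* for all i, j ∈ C_k. (b) For 1 ≤ k < k' ≤ K, if there exist i ∈ C_k and j ∈ C_{k'} with λ < ‖b_i − b_j‖ / (2(n−1)), then x_i* ≠ x_j*. -/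
open Finset RealInnerProductSpace

/-- The sum-of-norms clustering objective
`(1/2) ∑ᵢ ‖xᵢ - bᵢ‖² + λ ∑_{i<j} ‖xᵢ - xⱼ‖`. -/
noncomputable def sonObj {d n : ℕ} (b : Fin n → EuclideanSpace ℝ (Fin d)) (lam : ℝ)
    (x : Fin n → EuclideanSpace ℝ (Fin d)) : ℝ :=
  (1 / 2) * ∑ i, ‖x i - b i‖ ^ 2 +
    lam * ∑ p ∈ Finset.univ.filter (fun p : Fin n × Fin n => p.1 < p.2), ‖x p.1 - x p.2‖

lemma pair_sum_eq {n : ℕ} (g : Fin n → Fin n → ℝ) (hsym : ∀ i j, g i j = g j i)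
    (hdiag : ∀ i, g i i = 0) :
    ∑ p ∈ Finset.univ.filter (fun p : Fin n × Fin n => p.1 < p.2), g p.1 p.2
      = (1/2) * ∑ i, ∑ j, g i j := by
  have h0 : ∑ i, ∑ j, g i j = ∑ p : Fin n × Fin n, g p.1 p.2 := by
    rw [← Finset.sum_product']
    rw [Finset.univ_product_univ]
  have h1 := Finset.sum_filter_add_sum_filter_not Finset.univ
    (fun p : Fin n × Fin n => p.1 < p.2) (fun p => g p.1 p.2)
  have h2 : ∑ p ∈ Finset.univ.filter (fun p : Fin n × Fin n => ¬ p.1 < p.2), g p.1 p.2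
      = ∑ p ∈ Finset.univ.filter (fun p : Fin n × Fin n => p.2 < p.1), g p.1 p.2 := by
    symm
    apply Finset.sum_subset
    · intro p hp
      simp only [Finset.mem_filter, Finset.mem_univ, true_and] at hp ⊢
      exact not_lt_of_gt hp
    · intro p hp hnp
      simp only [Finset.mem_filter, Finset.mem_univ, true_and] at hp hnp
      have : p.1 = p.2 := le_antisymm (not_lt.mp hnp) (not_lt.mp hp)
      rw [this, hdiag]
  have h3 : ∑ p ∈ Finset.univ.filter (fun p : Fin n × Fin n => p.2 < p.1), g p.1 p.2
      = ∑ p ∈ Finset.univ.filter (fun p : Fin n × Fin n => p.1 < p.2), g p.1 p.2 := by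
    apply Finset.sum_nbij' (i := Prod.swap) (j := Prod.swap) <;>
      simp [hsym, Finset.mem_filter]
  rw [h0, ← h1, h2, h3]; ring

lemma sonObj_eq {d n : ℕ} (b : Fin n → EuclideanSpace ℝ (Fin d)) (lam : ℝ)
    (x : Fin n → EuclideanSpace ℝ (Fin d)) :
    sonObj b lam x = (1/2) * ∑ i, ‖x i - b i‖ ^ 2
      + (lam/2) * ∑ i, ∑ j, ‖x i - x j‖ := by
  unfold sonObj
  rw [pair_sum_eq (fun i j => ‖x i - x j‖) (fun i j => norm_sub_rev _ _) (fun i => by simp)]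
  ring

lemma part_a {d n : ℕ} (b : Fin n → EuclideanSpace ℝ (Fin d)) (lam : ℝ) (hlam : 0 < lam)
    (x : Fin n → EuclideanSpace ℝ (Fin d))
    (hmin : ∀ z, sonObj b lam x ≤ sonObj b lam z)
    (S : Finset (Fin n))
    (hS : ∀ i ∈ S, ∀ j ∈ S, ‖b i - b j‖ ≤ lam * S.card)
    {i0 j0 : Fin n} (hi0 : i0 ∈ S) (hj0 : j0 ∈ S) : x i0 = x j0 := by
  have hm : 0 < (S.card : ℝ) := by
    have : 0 < S.card := Finset.card_pos.mpr ⟨i0, hi0⟩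
    exact_mod_cast this
  set xb : EuclideanSpace ℝ (Fin d) := (S.card : ℝ)⁻¹ • ∑ i ∈ S, x i with hxb
  have hsum : (S.card : ℝ) • xb = ∑ i ∈ S, x i := smul_inv_smul₀ hm.ne' _
  set y : Fin n → EuclideanSpace ℝ (Fin d) := fun i => if i ∈ S then xb else x i with hy
  have hyS : ∀ i ∈ S, y i = xb := fun i hi => by simp [hy, hi]
  have hyC : ∀ i ∈ Sᶜ, y i = x i := fun i hi => by
    simp only [Finset.mem_compl] at hi; simp [hy, hi]
  -- sum of (x i - xb) over S is zero
  have hzero : ∑ i ∈ S, (x i - xb) = 0 := by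
    rw [Finset.sum_sub_distrib, Finset.sum_const, ← hsum, Nat.cast_smul_eq_nsmul, sub_self]
  -- fidelity difference
  have hfid : ∑ i, ‖x i - b i‖ ^ 2 - ∑ i, ‖y i - b i‖ ^ 2
      = (∑ i ∈ S, ‖x i - xb‖ ^ 2) - 2 * ∑ i ∈ S, ⟪x i - xb, b i⟫ := by
    rw [← Finset.sum_sub_distrib]
    have e1 : ∑ i, (‖x i - b i‖ ^ 2 - ‖y i - b i‖ ^ 2)
        = ∑ i ∈ S, (‖x i - b i‖ ^ 2 - ‖xb - b i‖ ^ 2) := by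
      rw [show (Finset.univ : Finset (Fin n)) = S ∪ Sᶜ by simp]
      rw [Finset.sum_union (disjoint_compl_right)]
      have e2 : ∑ i ∈ Sᶜ, (‖x i - b i‖ ^ 2 - ‖y i - b i‖ ^ 2) = 0 :=
        Finset.sum_eq_zero fun i hi => by rw [hyC i hi, sub_self]
      rw [e2, add_zero]
      exact Finset.sum_congr rfl fun i hi => by rw [hyS i hi]
    rw [e1]
    have e3 : ∀ i ∈ S, ‖x i - b i‖ ^ 2 - ‖xb - b i‖ ^ 2
        = ‖x i - xb‖ ^ 2 + 2 * ⟪x i - xb, xb - b i⟫ := by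
      intro i _
      have : x i - b i = (x i - xb) + (xb - b i) := (sub_add_sub_cancel _ _ _).symm
      rw [this, norm_add_sq_real]; ring
    rw [Finset.sum_congr rfl e3, Finset.sum_add_distrib]
    have e4 : ∑ i ∈ S, 2 * ⟪x i - xb, xb - b i⟫
        = -2 * ∑ i ∈ S, ⟪x i - xb, b i⟫ := by
      have : ∀ i ∈ S, 2 * ⟪x i - xb, xb - b i⟫
          = 2 * ⟪x i - xb, xb⟫ - 2 * ⟪x i - xb, b i⟫ := fun i _ => by
        rw [inner_sub_right]; ring
      rw [Finset.sum_congr rfl this, Finset.sum_sub_distrib, ← Finset.mul_sum,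
        ← Finset.mul_sum, ← sum_inner, hzero]
      simp
    rw [e4]; ring
  -- Jensen: for any z, sum over S of ||xb - z|| <= sum of ||x i - z||
  have hJ : ∀ z : EuclideanSpace ℝ (Fin d),
      ∑ i ∈ S, ‖xb - z‖ ≤ ∑ i ∈ S, ‖x i - z‖ := by
    intro z
    have e1 : ∑ i ∈ S, (x i - z) = (S.card : ℝ) • (xb - z) := by
      rw [smul_sub, hsum, Finset.sum_sub_distrib, Finset.sum_const,
        Nat.cast_smul_eq_nsmul]
    calc ∑ i ∈ S, ‖xb - z‖ = (S.card : ℝ) * ‖xb - z‖ := by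
          rw [Finset.sum_const, nsmul_eq_mul]
      _ = ‖(S.card : ℝ) • (xb - z)‖ := by
          rw [norm_smul, Real.norm_eq_abs, abs_of_pos hm]
      _ = ‖∑ i ∈ S, (x i - z)‖ := by rw [e1]
      _ ≤ ∑ i ∈ S, ‖x i - z‖ := norm_sum_le _ _
  -- splitting double sums into blocks
  have hsplit : ∀ u : Fin n → EuclideanSpace ℝ (Fin d),
      ∑ i, ∑ j, ‖u i - u j‖
        = ((∑ i ∈ S, ∑ j ∈ S, ‖u i - u j‖) + ∑ i ∈ S, ∑ j ∈ Sᶜ, ‖u i - u j‖)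
          + ((∑ i ∈ Sᶜ, ∑ j ∈ S, ‖u i - u j‖) + ∑ i ∈ Sᶜ, ∑ j ∈ Sᶜ, ‖u i - u j‖) := by
    intro u
    rw [← Finset.sum_add_sum_compl S (fun i => ∑ j, ‖u i - u j‖)]
    congr 1 <;> rw [← Finset.sum_add_distrib] <;>
      exact Finset.sum_congr rfl fun i _ =>
        (Finset.sum_add_sum_compl S (fun j => ‖u i - u j‖)).symm
  -- penalty comparison
  have hpen : (∑ i, ∑ j, ‖y i - y j‖) + ∑ i ∈ S, ∑ j ∈ S, ‖x i - x j‖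
      ≤ ∑ i, ∑ j, ‖x i - x j‖ := by
    rw [hsplit x, hsplit y]
    have hSS : ∑ i ∈ S, ∑ j ∈ S, ‖y i - y j‖ = 0 :=
      Finset.sum_eq_zero fun i hi => Finset.sum_eq_zero fun j hj => by
        rw [hyS i hi, hyS j hj, sub_self, norm_zero]
    have hCC : ∑ i ∈ Sᶜ, ∑ j ∈ Sᶜ, ‖y i - y j‖ = ∑ i ∈ Sᶜ, ∑ j ∈ Sᶜ, ‖x i - x j‖ :=
      Finset.sum_congr rfl fun i hi => Finset.sum_congr rfl fun j hj => by
        rw [hyC i hi, hyC j hj]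
    have hSC : ∑ i ∈ S, ∑ j ∈ Sᶜ, ‖y i - y j‖ ≤ ∑ i ∈ S, ∑ j ∈ Sᶜ, ‖x i - x j‖ := by
      rw [Finset.sum_comm]
      rw [show ∑ i ∈ S, ∑ j ∈ Sᶜ, ‖x i - x j‖ = ∑ j ∈ Sᶜ, ∑ i ∈ S, ‖x i - x j‖
        from Finset.sum_comm]
      refine Finset.sum_le_sum fun j hj => ?_
      have : ∑ i ∈ S, ‖y i - y j‖ = ∑ i ∈ S, ‖xb - x j‖ :=
        Finset.sum_congr rfl fun i hi => by rw [hyS i hi, hyC j hj]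
      rw [this]; exact hJ (x j)
    have hCS : ∑ i ∈ Sᶜ, ∑ j ∈ S, ‖y i - y j‖ ≤ ∑ i ∈ Sᶜ, ∑ j ∈ S, ‖x i - x j‖ := by
      refine Finset.sum_le_sum fun i hi => ?_
      have e : ∑ j ∈ S, ‖y i - y j‖ = ∑ j ∈ S, ‖xb - x i‖ :=
        Finset.sum_congr rfl fun j hj => by rw [hyS j hj, hyC i hi, norm_sub_rev]
      have e2 : ∑ j ∈ S, ‖x i - x j‖ = ∑ j ∈ S, ‖x j - x i‖ :=
        Finset.sum_congr rfl fun j _ => norm_sub_rev _ _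
      rw [e, e2]; exact hJ (x i)
    linarith
  -- inner product identity
  have hid : 2 * (S.card : ℝ) * ∑ i ∈ S, ⟪x i - xb, b i⟫
      = ∑ i ∈ S, ∑ j ∈ S, ⟪x i - x j, b i - b j⟫ := by
    have expand : ∀ i ∈ S, ∀ j ∈ S, ⟪x i - x j, b i - b j⟫
        = ⟪x i, b i⟫ - ⟪x i, b j⟫ - ⟪x j, b i⟫ + ⟪x j, b j⟫ := by
      intro i _ j _
      rw [inner_sub_left, inner_sub_right, inner_sub_right]; ring
    have e1 : ∑ i ∈ S, ∑ j ∈ S, ⟪x i - x j, b i - b j⟫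
        = (S.card : ℝ) * (∑ i ∈ S, ⟪x i, b i⟫) - ⟪∑ i ∈ S, x i, ∑ i ∈ S, b i⟫
          - ⟪∑ i ∈ S, x i, ∑ i ∈ S, b i⟫ + (S.card : ℝ) * (∑ i ∈ S, ⟪x i, b i⟫) := by
      rw [Finset.sum_congr rfl (fun i hi => Finset.sum_congr rfl (expand i hi))]
      have r1 : ∑ i ∈ S, ∑ j ∈ S, ⟪x i, b i⟫ = (S.card : ℝ) * ∑ i ∈ S, ⟪x i, b i⟫ := by
        rw [Finset.mul_sum]
        exact Finset.sum_congr rfl fun i _ => by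
          rw [Finset.sum_const, nsmul_eq_mul]
      have r2 : ∑ i ∈ S, ∑ j ∈ S, ⟪x i, b j⟫ = ⟪∑ i ∈ S, x i, ∑ i ∈ S, b i⟫ := by
        rw [sum_inner]
        exact Finset.sum_congr rfl fun i _ => (inner_sum _ _ _).symm
      have r3 : ∑ i ∈ S, ∑ j ∈ S, ⟪x j, b i⟫ = ⟪∑ i ∈ S, x i, ∑ i ∈ S, b i⟫ := by
        rw [Finset.sum_comm, sum_inner]
        exact Finset.sum_congr rfl fun j _ => (inner_sum _ _ _).symm
      have r4 : ∑ i ∈ S, ∑ j ∈ S, ⟪x j, b j⟫ = (S.card : ℝ) * ∑ i ∈ S, ⟪x i, b i⟫ := by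
        rw [Finset.sum_comm]
        rw [Finset.mul_sum]
        exact Finset.sum_congr rfl fun j _ => by
          rw [Finset.sum_const, nsmul_eq_mul]
      calc ∑ i ∈ S, ∑ j ∈ S, (⟪x i, b i⟫ - ⟪x i, b j⟫ - ⟪x j, b i⟫ + ⟪x j, b j⟫)
          = ∑ i ∈ S, ∑ j ∈ S, ⟪x i, b i⟫ - ∑ i ∈ S, ∑ j ∈ S, ⟪x i, b j⟫
            - ∑ i ∈ S, ∑ j ∈ S, ⟪x j, b i⟫ + ∑ i ∈ S, ∑ j ∈ S, ⟪x j, b j⟫ := by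
            simp only [Finset.sum_add_distrib, Finset.sum_sub_distrib]
        _ = _ := by rw [r1, r2, r3, r4]
    have e2 : ∑ i ∈ S, ⟪x i - xb, b i⟫
        = (∑ i ∈ S, ⟪x i, b i⟫) - ⟪xb, ∑ i ∈ S, b i⟫ := by
      have : ∀ i ∈ S, ⟪x i - xb, b i⟫ = ⟪x i, b i⟫ - ⟪xb, b i⟫ := fun i _ => by
        rw [inner_sub_left]
      rw [Finset.sum_congr rfl this, Finset.sum_sub_distrib, inner_sum]
    have e3 : (S.card : ℝ) * ⟪xb, ∑ i ∈ S, b i⟫ = ⟪∑ i ∈ S, x i, ∑ i ∈ S, b i⟫ := by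
      rw [← real_inner_smul_left, hsum]
    rw [e1, e2]; ring_nf
    nlinarith [e3]
  -- inner product bound
  have hip : ∑ i ∈ S, ⟪x i - xb, b i⟫ ≤ (lam/2) * ∑ i ∈ S, ∑ j ∈ S, ‖x i - x j‖ := by
    have hb : ∑ i ∈ S, ∑ j ∈ S, ⟪x i - x j, b i - b j⟫
        ≤ lam * (S.card : ℝ) * ∑ i ∈ S, ∑ j ∈ S, ‖x i - x j‖ := by
      rw [Finset.mul_sum]
      refine Finset.sum_le_sum fun i hi => ?_
      rw [Finset.mul_sum]
      refine Finset.sum_le_sum fun j hj => ?_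
      calc ⟪x i - x j, b i - b j⟫ ≤ ‖x i - x j‖ * ‖b i - b j‖ := real_inner_le_norm _ _
        _ ≤ ‖x i - x j‖ * (lam * S.card) :=
            mul_le_mul_of_nonneg_left (hS i hi j hj) (norm_nonneg _)
        _ = lam * (S.card : ℝ) * ‖x i - x j‖ := by ring
    nlinarith [hid, hm]
  -- combine everything
  have key : sonObj b lam y + (1/2) * ∑ i ∈ S, ‖x i - xb‖ ^ 2 ≤ sonObj b lam x := by
    rw [sonObj_eq, sonObj_eq]
    have hp2 : (lam/2) * ((∑ i, ∑ j, ‖y i - y j‖) + ∑ i ∈ S, ∑ j ∈ S, ‖x i - x j‖)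
        ≤ (lam/2) * ∑ i, ∑ j, ‖x i - x j‖ :=
      mul_le_mul_of_nonneg_left hpen (by linarith)
    nlinarith [hfid, hip, hp2]
  have hQ : ∑ i ∈ S, ‖x i - xb‖ ^ 2 ≤ 0 := by
    have := hmin y
    linarith [key]
  have hQ0 : ∑ i ∈ S, ‖x i - xb‖ ^ 2 = 0 :=
    le_antisymm hQ (Finset.sum_nonneg fun i _ => sq_nonneg _)
  have hall : ∀ i ∈ S, ‖x i - xb‖ ^ 2 = 0 :=
    (Finset.sum_eq_zero_iff_of_nonneg fun i _ => sq_nonneg _).mp hQ0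
  have hx : ∀ i ∈ S, x i = xb := by
    intro i hi
    have h2 : ‖x i - xb‖ = 0 := pow_eq_zero_iff two_ne_zero |>.mp (hall i hi)
    exact sub_eq_zero.mp (norm_eq_zero.mp h2)
  rw [hx i0 hi0, hx j0 hj0]

lemma dist_bound {d n : ℕ} (b : Fin n → EuclideanSpace ℝ (Fin d)) (lam : ℝ) (hlam : 0 < lam)
    (x : Fin n → EuclideanSpace ℝ (Fin d))
    (hmin : ∀ z, sonObj b lam x ≤ sonObj b lam z) (i : Fin n) :
    ‖x i - b i‖ ≤ lam * ((n : ℝ) - 1) := by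
  set r : ℝ := ‖x i - b i‖ with hr
  have hr0 : 0 ≤ r := norm_nonneg _
  have hn1 : (1 : ℝ) ≤ (n : ℝ) := by exact_mod_cast i.pos
  have hsq : r ^ 2 ≤ lam * ((n : ℝ) - 1) * r := by
    refine le_of_forall_pos_le_add fun ε hε => ?_
    set t : ℝ := min 1 (ε / (r ^ 2 + 1)) with htdef
    have ht0 : 0 < t := lt_min one_pos (div_pos hε (by positivity))
    have ht1 : t ≤ 1 := min_le_left _ _
    have hte : t ≤ ε / (r ^ 2 + 1) := min_le_right _ _
    set y := Function.update x i (x i + t • (b i - x i)) with hydef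
    have hyi : y i = x i + t • (b i - x i) := Function.update_self _ _ _
    have hyj : ∀ j, j ≠ i → y j = x j := fun j hj => Function.update_of_ne hj _ _
    have h1 : ‖y i - b i‖ = (1 - t) * r := by
      have e : y i - b i = (1 - t) • (x i - b i) := by
        rw [hyi]; module
      rw [e, norm_smul, Real.norm_eq_abs, abs_of_nonneg (by linarith)]
    have h2 : ‖y i - x i‖ = t * r := by
      have e : y i - x i = t • (b i - x i) := by rw [hyi]; module
      rw [e, norm_smul, Real.norm_eq_abs, abs_of_pos ht0, norm_sub_rev]
    -- fidelity
    have hfid : ∑ j, ‖y j - b j‖ ^ 2 = (∑ j, ‖x j - b j‖ ^ 2) - r ^ 2 + ((1 - t) * r) ^ 2 := by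
      have e : ∑ j, (‖y j - b j‖ ^ 2 - ‖x j - b j‖ ^ 2) = ((1 - t) * r) ^ 2 - r ^ 2 := by
        rw [Finset.sum_eq_single i]
        · rw [h1]
        · intro j _ hj; rw [hyj j hj, sub_self]
        · intro h; exact absurd (Finset.mem_univ i) h
      have := Finset.sum_sub_distrib (s := Finset.univ)
        (f := fun j => ‖y j - b j‖ ^ 2) (g := fun j => ‖x j - b j‖ ^ 2)
      rw [this] at e
      linarith
    -- penalty per-term bound
    have hterm : ∀ j l : Fin n, ‖y j - y l‖ ≤ ‖x j - x l‖
        + ((if j = i ∧ j ≠ l then t * r else 0) + (if l = i ∧ j ≠ l then t * r else 0)) := by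
      intro j l
      by_cases hjl : j = l
      · subst hjl; simp
      by_cases hj : j = i
      · by_cases hl : l = i
        · exact absurd (hj.trans hl.symm) hjl
        · rw [if_pos ⟨hj, hjl⟩, if_neg (fun hc => hl hc.1), hyj l hl, hj, add_zero]
          calc ‖y i - x l‖ ≤ ‖y i - x i‖ + ‖x i - x l‖ :=
                norm_sub_le_norm_sub_add_norm_sub _ _ _
            _ = ‖x i - x l‖ + t * r := by rw [h2]; ring
      · by_cases hl : l = i
        · rw [if_neg (fun hc => hj hc.1), if_pos ⟨hl, hjl⟩, hyj j hj, hl, zero_add]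
          calc ‖x j - y i‖ ≤ ‖x j - x i‖ + ‖x i - y i‖ :=
                norm_sub_le_norm_sub_add_norm_sub _ _ _
            _ = ‖x j - x i‖ + t * r := by rw [norm_sub_rev (x i) (y i), h2]
        · rw [hyj j hj, hyj l hl, if_neg (fun hc => hj hc.1), if_neg (fun hc => hl hc.1)]
          simp
    -- counting sums
    have count1 : ∀ c : ℝ, 0 ≤ c → ∑ j : Fin n, ∑ l : Fin n, (if j = i ∧ j ≠ l then c else 0)
        = ((n : ℝ) - 1) * c := by
      intro c hc
      rw [Finset.sum_eq_single i]
      · have : ∀ l : Fin n, (if i = i ∧ i ≠ l then c else 0) = c - (if l = i then c else 0) := by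
          intro l
          by_cases h : l = i
          · subst h; simp
          · rw [if_pos ⟨rfl, fun hh => h hh.symm⟩, if_neg h]; ring
        rw [Finset.sum_congr rfl fun l _ => this l, Finset.sum_sub_distrib,
          Finset.sum_const, Finset.sum_ite_eq' Finset.univ i (fun _ => c)]
        simp [Finset.card_univ]
        ring
      · intro j _ hj
        exact Finset.sum_eq_zero fun l _ => if_neg (by tauto)
      · intro h; exact absurd (Finset.mem_univ i) h
    have count2 : ∀ c : ℝ, 0 ≤ c → ∑ j : Fin n, ∑ l : Fin n, (if l = i ∧ j ≠ l then c else 0)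
        = ((n : ℝ) - 1) * c := by
      intro c hc
      rw [Finset.sum_comm]
      rw [← count1 c hc]
      exact Finset.sum_congr rfl fun l _ => Finset.sum_congr rfl fun j _ => by
        by_cases h1 : l = i <;> by_cases h2 : l = j <;> simp [h1, h2, eq_comm, Ne, *]
    have htr : 0 ≤ t * r := mul_nonneg ht0.le hr0
    have hpen : ∑ j, ∑ l, ‖y j - y l‖
        ≤ (∑ j, ∑ l, ‖x j - x l‖) + 2 * (((n : ℝ) - 1) * (t * r)) := by
      have step : ∑ j, ∑ l, ‖y j - y l‖ ≤ ∑ j : Fin n, ∑ l : Fin n, (‖x j - x l‖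
          + ((if j = i ∧ j ≠ l then t * r else 0) + (if l = i ∧ j ≠ l then t * r else 0))) :=
        Finset.sum_le_sum fun j _ => Finset.sum_le_sum fun l _ => hterm j l
      simp only [Finset.sum_add_distrib] at step
      rw [count1 _ htr, count2 _ htr] at step
      linarith
    -- use minimality
    have hm := hmin y
    rw [sonObj_eq, sonObj_eq] at hm
    have hlam2 : (0:ℝ) ≤ lam / 2 := by linarith
    have hp2 : (lam/2) * ∑ j, ∑ l, ‖y j - y l‖
        ≤ (lam/2) * ((∑ j, ∑ l, ‖x j - x l‖) + 2 * (((n : ℝ) - 1) * (t * r))) :=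
      mul_le_mul_of_nonneg_left hpen hlam2
    have A : t * ((1 - t/2) * r ^ 2) ≤ t * (lam * ((n : ℝ) - 1) * r) := by
      rw [hfid] at hm
      nlinarith [hm, hp2]
    have B : (1 - t/2) * r ^ 2 ≤ lam * ((n : ℝ) - 1) * r :=
      le_of_mul_le_mul_left (by linarith [A]) ht0
    have C : (t/2) * r ^ 2 ≤ ε := by
      have h' : t * (r ^ 2 + 1) ≤ ε := (le_div_iff₀ (by positivity)).mp hte
      nlinarith [sq_nonneg r, ht0.le]
    linarith
  rcases hr0.eq_or_lt with h | h
  · rw [← h]; exact mul_nonneg hlam.le (by linarith)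
  · nlinarith [hsq]

/-- recovery conditions for sum-of-norms clustering. Let `xstar` be
the minimizer of the SON objective for data `b` and parameter `λ > 0`, and let
`C 1, …, C K` partition the index set. (a) If `λ ≥ ‖bᵢ - bⱼ‖ / |C k|` for all
`i, j ∈ C k`, then `xstarᵢ = xstarⱼ` for all `i, j ∈ C k`. (b) If `k < k'`,
`i ∈ C k`, `j ∈ C k'` and `λ < ‖bᵢ - bⱼ‖ / (2(n-1))`, then `xstarᵢ ≠ xstarⱼ`. -/

theorem stmt15 {d n K : ℕ} (b : Fin n → EuclideanSpace ℝ (Fin d))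
    (lam : ℝ) (hlam : 0 < lam)
    (xstar : Fin n → EuclideanSpace ℝ (Fin d))
    (hmin : ∀ x, sonObj b lam xstar ≤ sonObj b lam x)
    (C : Fin K → Finset (Fin n))
    (hdisj : ∀ k k', k ≠ k' → Disjoint (C k) (C k'))
    (hcover : ∀ i, ∃ k, i ∈ C k) :
    (∀ k, (∀ i ∈ C k, ∀ j ∈ C k, ‖b i - b j‖ / (C k).card ≤ lam) →
      ∀ i ∈ C k, ∀ j ∈ C k, xstar i = xstar j) ∧
    (∀ k k' : Fin K, k < k' → ∀ i ∈ C k, ∀ j ∈ C k',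
      lam < ‖b i - b j‖ / (2 * ((n : ℝ) - 1)) → xstar i ≠ xstar j) := by
  constructor
  · intro k hk i hi j hj
    refine part_a b lam hlam xstar hmin (C k) ?_ hi hj
    intro i' hi' j' hj'
    have h1 := hk i' hi' j' hj'
    have hm : (0:ℝ) < ((C k).card : ℝ) := by
      exact_mod_cast Finset.card_pos.mpr ⟨i, hi⟩
    rwa [div_le_iff₀ hm] at h1
  · intro k k' hkk' i hi j hj hcond heq
    have hij : i ≠ j := fun h =>
      (Finset.disjoint_left.mp (hdisj k k' (ne_of_lt hkk')) hi) (h ▸ hj)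
    have hn2 : 2 ≤ n := by
      rcases i with ⟨iv, hiv⟩; rcases j with ⟨jv, hjv⟩
      simp only [Fin.mk.injEq, Ne] at hij
      omega
    have hpos : (0:ℝ) < 2 * ((n : ℝ) - 1) := by
      have : (2:ℝ) ≤ (n : ℝ) := by exact_mod_cast hn2
      linarith
    have h1 : lam * (2 * ((n : ℝ) - 1)) < ‖b i - b j‖ := (lt_div_iff₀ hpos).mp hcond
    have h2 := dist_bound b lam hlam xstar hmin i
    have h3 := dist_bound b lam hlam xstar hmin j
    have h4 : ‖b i - b j‖ ≤ ‖xstar i - b i‖ + ‖xstar j - b j‖ := by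
      have e : b i - b j = (b i - xstar i) + (xstar j - b j) := by rw [heq]; abel
      calc ‖b i - b j‖ = ‖(b i - xstar i) + (xstar j - b j)‖ := by rw [← e]
        _ ≤ ‖b i - xstar i‖ + ‖xstar j - b j‖ := norm_add_le _ _
        _ = ‖xstar i - b i‖ + ‖xstar j - b j‖ := by rw [norm_sub_rev (b i)]
    linarith
end
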